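/- arXiv:1303.3089 — 4 statements merged into one kernel-verified Lean document; each statement's English description precedes it below -/
import Mathlib

section
/- Let n ≥ 2 and let Γ ⊂ B be a compact set homeomorphic to the sphere 𝕊ⁿ⁻¹. If Γ is convex in the hyperbolic sense, then Γ satisfies the exterior horosphere condition: for every p ∈ Γ there exist ζ ∈ ℝⁿ with ‖ζ‖ = 1 and s ∈ (0,1) such that ‖p − (1−s)ζ‖ = s and the closed set {x : ‖x − (1−s)ζ‖ ≤ s} ∩ B is contained in the closure of B \ (Γ ∪ inn(Γ)). -/
noncomputable section

open MeasureTheory Real Set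

/-- `E n` is Euclidean `n`-space. -/
abbrev E (n : ℕ) := EuclideanSpace ℝ (Fin n)

/-- The Poincaré ball model `B`: the open unit ball of `ℝⁿ`. -/
def unitBall (n : ℕ) : Set (E n) := Metric.ball 0 1

/-- Inverse hyperbolic cosine. -/
def arcosh (x : ℝ) : ℝ := Real.log (x + Real.sqrt (x ^ 2 - 1))

/-- The hyperbolic distance in the ball model. -/
def hypDist {n : ℕ} (p q : E n) : ℝ :=
  _root_.arcosh (1 + 2 * ‖p - q‖ ^ 2 / ((1 - ‖p‖ ^ 2) * (1 - ‖q‖ ^ 2)))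

/-- `inn S`: the union of the bounded connected components of the complement of `S`
(for `S` homeomorphic to a sphere this is the inner region bounded by `S`). -/
def inn {n : ℕ} (S : Set (E n)) : Set (E n) :=
  {x | x ∉ S ∧ Bornology.IsBounded (connectedComponentIn Sᶜ x)}

/-- The conformal factor `F(p) = ((1-‖p‖²)/2)²`. -/
def Fconf {n : ℕ} (p : E n) : ℝ := ((1 - ‖p‖ ^ 2) / 2) ^ 2

/-- `τ_u(p) = √(1 + F(p)‖∇u(p)‖²)`. -/
def tauu {n : ℕ} (u : E n → ℝ) (p : E n) : ℝ :=
  Real.sqrt (1 + Fconf p * ‖gradient u p‖ ^ 2)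

/-- Euclidean divergence of a vector field. -/
def divergence {n : ℕ} (V : E n → E n) (p : E n) : ℝ :=
  ∑ i, fderiv ℝ V p (EuclideanSpace.single i 1) i

/-- The minimal-hypersurface operator in `Hⁿ × ℝ`:
`Q₀(u) = div(∇u/τ_u) + (n−2)⟨p,∇u⟩/(τ_u √F)`. -/
def Q0 {n : ℕ} (u : E n → ℝ) (p : E n) : ℝ :=
  divergence (fun q => (tauu u q)⁻¹ • gradient u q) p
    + ((n : ℝ) - 2) * (inner ℝ p (gradient u p) : ℝ) / (tauu u p * Real.sqrt (Fconf p))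

/-- `S` is homeomorphic to the unit sphere `𝕊ⁿ⁻¹`. -/
def HomeoSphere {n : ℕ} (S : Set (E n)) : Prop :=
  Nonempty (S ≃ₜ (Metric.sphere (0 : E n) 1))

/-- Interior sphere condition of radius `a`. -/
def IntSphereCond {n : ℕ} (S : Set (E n)) (a : ℝ) : Prop :=
  ∀ p ∈ S, ∃ c ∈ unitBall n, hypDist p c = a ∧
    {q ∈ unitBall n | hypDist q c = a} ⊆ closure (inn S)

/-- Exterior sphere condition of radius `b`. -/
def ExtSphereCond {n : ℕ} (S : Set (E n)) (b : ℝ) : Prop :=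
  ∀ p ∈ S, ∃ c ∈ unitBall n, hypDist p c = b ∧
    {q ∈ unitBall n | hypDist q c ≤ b} ⊆ closure (unitBall n \ (S ∪ inn S))

/-- Exterior horosphere condition. -/
def ExtHoroCond {n : ℕ} (S : Set (E n)) : Prop :=
  ∀ p ∈ S, ∃ ζ : E n, ∃ s : ℝ, ‖ζ‖ = 1 ∧ 0 < s ∧ s < 1 ∧
    ‖p - (1 - s) • ζ‖ = s ∧
    ({x : E n | ‖x - (1 - s) • ζ‖ ≤ s} ∩ unitBall n) ⊆
      closure (unitBall n \ (S ∪ inn S))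

/-- Convexity in the hyperbolic sense in the ball model. -/
def HypConvex {n : ℕ} (S : Set (E n)) : Prop :=
  ∀ p ∈ S,
    (∃ v : E n, v ≠ 0 ∧ (inner ℝ v p : ℝ) = 0 ∧
      ((∀ q ∈ S, (0:ℝ) ≤ inner ℝ v q) ∨ (∀ q ∈ S, (inner ℝ v q : ℝ) ≤ 0))) ∨
    (∃ c : E n, ∃ ρ : ℝ, 0 < ρ ∧ ‖c‖ ^ 2 = 1 + ρ ^ 2 ∧ ‖p - c‖ = ρ ∧
      ((∀ q ∈ S, ‖q - c‖ ≤ ρ) ∨ (∀ q ∈ S, ρ ≤ ‖q - c‖)))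

/-- The integrand of the half-catenoid generating function. -/
def phir (n : ℕ) (r ξ : ℝ) : ℝ :=
  Real.sinh r ^ (n - 1) / Real.sqrt (Real.sinh ξ ^ (2 * n - 2) - Real.sinh r ^ (2 * n - 2))

/-- The half-catenoid generating function `g_r`. -/
def gr (n : ℕ) (r ρ : ℝ) : ℝ := ∫ ξ in r..ρ, phir n r ξ

/-- The total height `h⁺(r)` of the half-catenoid. -/
def hplus (n : ℕ) (r : ℝ) : ℝ := ∫ ξ in Set.Ioi r, phir n r ξ


namespace Stmt4Aux
open RealInnerProductSpace

variable {n : ℕ}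

lemma eq_of_sq_eq {a b : ℝ} (ha : 0 ≤ a) (hb : 0 ≤ b) (h : a ^ 2 = b ^ 2) : a = b := by
  rw [← Real.sqrt_sq ha, h, Real.sqrt_sq hb]

lemma unbounded_of (K : Set (E n)) (h : ∀ R : ℝ, ∃ z ∈ K, R < ‖z‖) :
    ¬ Bornology.IsBounded K := by
  intro hb
  obtain ⟨C, hC⟩ := isBounded_iff_forall_norm_le.mp hb
  obtain ⟨z, hz, hz2⟩ := h C
  exact absurd (hC z hz) (not_le.mpr hz2)

lemma mem_good {Γ : Set (E n)} {y : E n} (hy : y ∈ unitBall n)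
    {K : Set (E n)} (hK : IsPreconnected K) (hyK : y ∈ K) (hKΓ : K ⊆ Γᶜ)
    (hKu : ¬ Bornology.IsBounded K) :
    y ∈ unitBall n \ (Γ ∪ inn Γ) := by
  refine ⟨hy, fun h => ?_⟩
  rcases h with h | h
  · exact hKΓ hyK h
  · exact hKu (h.2.subset (hK.subset_connectedComponentIn hyK hKΓ))

lemma closure_step {Γ : Set (E n)} {x : E n}
    (H : ∀ ε : ℝ, 0 < ε → ∃ y, ‖x - y‖ < ε ∧ y ∈ unitBall n \ (Γ ∪ inn Γ)) :
    x ∈ closure (unitBall n \ (Γ ∪ inn Γ)) := by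
  rw [Metric.mem_closure_iff]
  intro ε hε
  obtain ⟨y, h1, h2⟩ := H ε hε
  exact ⟨y, h2, by rwa [dist_eq_norm]⟩

lemma halfspace_good {Γ : Set (E n)} {u y : E n} (hun : ‖u‖ = 1)
    (hside : ∀ q ∈ Γ, 0 ≤ ⟪u, q⟫) (hy : ⟪u, y⟫ < 0) (hyB : y ∈ unitBall n) :
    y ∈ unitBall n \ (Γ ∪ inn Γ) := by
  set K : Set (E n) := {z : E n | ⟪u, z⟫ < 0} with hKdef
  have hlin : IsLinearMap ℝ (fun z : E n => ⟪u, z⟫) :=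
    ⟨fun a b => inner_add_right u a b, fun r a => real_inner_smul_right u a r⟩
  have hKpre : IsPreconnected K := (convex_halfSpace_lt hlin 0).isPreconnected
  refine mem_good hyB hKpre hy ?_ ?_
  · intro z hz hzΓ
    exact absurd (hside z hzΓ) (not_le.mpr hz)
  · apply unbounded_of
    intro R
    refine ⟨-((|R| + 1) • u), ?_, ?_⟩
    · show ⟪u, -((|R|+1) • u)⟫ < 0
      rw [inner_neg_right, real_inner_smul_right, real_inner_self_eq_norm_sq, hun]
      nlinarith [abs_nonneg R]
    · rw [norm_neg, norm_smul, Real.norm_eq_abs, hun,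
        abs_of_nonneg (by positivity : (0:ℝ) ≤ |R| + 1)]
      nlinarith [le_abs_self R]

lemma ray_good {Γ : Set (E n)} {c y : E n} {ρ : ℝ} (hρ : 0 ≤ ρ)
    (hside : ∀ q ∈ Γ, ‖q - c‖ ≤ ρ) (hy : ρ < ‖y - c‖) (hyB : y ∈ unitBall n) :
    y ∈ unitBall n \ (Γ ∪ inn Γ) := by
  set K : Set (E n) := (fun t : ℝ => c + t • (y - c)) '' Ici 1 with hKdef
  have hcont : Continuous fun t : ℝ => c + t • (y - c) := by continuity
  have hKpre : IsPreconnected K := isPreconnected_Ici.image _ hcont.continuousOn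
  have hyc : (0:ℝ) < ‖y - c‖ := lt_of_le_of_lt hρ hy
  have hmem : ∀ t : ℝ, 1 ≤ t → ρ < ‖c + t • (y - c) - c‖ := by
    intro t ht
    rw [add_sub_cancel_left, norm_smul, Real.norm_eq_abs, abs_of_nonneg (by linarith)]
    calc ρ < ‖y - c‖ := hy
    _ ≤ t * ‖y - c‖ := le_mul_of_one_le_left (norm_nonneg _) ht
  have hyK : y ∈ K := ⟨1, self_mem_Ici, by simp⟩
  refine mem_good hyB hKpre hyK ?_ ?_
  · rintro z ⟨t, ht, rfl⟩ hzΓ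
    exact absurd (hside _ hzΓ) (not_le.mpr (hmem t ht))
  · apply unbounded_of
    intro R
    set t : ℝ := max 1 ((|R| + ‖c‖ + 1) / ‖y - c‖) with htdef
    refine ⟨c + t • (y - c), ⟨t, mem_Ici.mpr (le_max_left _ _), rfl⟩, ?_⟩
    have h1 : ‖t • (y - c)‖ - ‖-c‖ ≤ ‖t • (y - c) - -c‖ := norm_sub_norm_le _ _
    have h2 : t • (y - c) - -c = c + t • (y - c) := by abel
    rw [h2, norm_neg] at h1
    have h3 : (|R| + ‖c‖ + 1) ≤ t * ‖y - c‖ := by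
      rw [htdef]
      calc |R| + ‖c‖ + 1 = ((|R| + ‖c‖ + 1) / ‖y - c‖) * ‖y - c‖ := by
            field_simp
      _ ≤ max 1 ((|R| + ‖c‖ + 1) / ‖y - c‖) * ‖y - c‖ :=
            mul_le_mul_of_nonneg_right (le_max_right _ _) (norm_nonneg _)
    have h4 : ‖t • (y - c)‖ = t * ‖y - c‖ := by
      rw [norm_smul, Real.norm_eq_abs, abs_of_nonneg (le_trans zero_le_one (le_max_left _ _))]
    nlinarith [le_abs_self R]

lemma inball_good {Γ : Set (E n)} (hΓB : Γ ⊆ unitBall n) {c y : E n} {ρ : ℝ}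
    (hside : ∀ q ∈ Γ, ρ ≤ ‖q - c‖) (hc1 : 1 < ‖c‖) (hρ : 0 < ρ)
    (hy : ‖y - c‖ < ρ) (hyB : y ∈ unitBall n) :
    y ∈ unitBall n \ (Γ ∪ inn Γ) := by
  have hcn : (0:ℝ) < ‖c‖ := by linarith
  set z₀ : E n := (1 + ρ / (2 * ‖c‖)) • c with hz₀def
  have hcoef : (0:ℝ) < 1 + ρ / (2 * ‖c‖) := by positivity
  have hz₀c : ‖z₀ - c‖ = ρ / 2 := by
    have e : z₀ - c = (ρ / (2 * ‖c‖)) • c := by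
      rw [hz₀def, add_smul, one_smul, add_sub_cancel_left]
    rw [e, norm_smul, Real.norm_eq_abs, abs_of_pos (by positivity)]
    field_simp
  have hz₀n : ‖z₀‖ = ‖c‖ + ρ / 2 := by
    rw [hz₀def, norm_smul, Real.norm_eq_abs, abs_of_pos hcoef]
    field_simp
  have hz₀1 : 1 < ‖z₀‖ := by rw [hz₀n]; linarith
  set K : Set (E n) := segment ℝ y z₀ ∪ ((fun t : ℝ => t • z₀) '' Ici 1) with hKdef
  have hraycont : Continuous fun t : ℝ => t • z₀ := by continuity
  have hKpre : IsPreconnected K := by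
    apply IsPreconnected.union z₀
    · exact right_mem_segment ℝ y z₀
    · exact ⟨1, self_mem_Ici, one_smul ℝ z₀⟩
    · exact (convex_segment y z₀).isPreconnected
    · exact isPreconnected_Ici.image _ hraycont.continuousOn
  have hyK : y ∈ K := Or.inl (left_mem_segment ℝ y z₀)
  have hsub : segment ℝ y z₀ ⊆ Metric.ball c ρ :=
    (convex_ball c ρ).segment_subset (by rwa [Metric.mem_ball, dist_eq_norm])
      (by rw [Metric.mem_ball, dist_eq_norm, hz₀c]; linarith)
  refine mem_good hyB hKpre hyK ?_ ?_
  · rintro z (hz | ⟨t, ht, rfl⟩) hzΓ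
    · have h1 : ‖z - c‖ < ρ := by
        have := hsub hz; rwa [Metric.mem_ball, dist_eq_norm] at this
      exact absurd (hside z hzΓ) (not_le.mpr h1)
    · have ht1 : (1:ℝ) ≤ t := mem_Ici.mp ht
      have h1 : ‖t • z₀‖ < 1 := by
        have := hΓB hzΓ
        simpa [unitBall, mem_ball_zero_iff] using this
      have h2 : 1 ≤ ‖t • z₀‖ := by
        rw [norm_smul, Real.norm_eq_abs, abs_of_nonneg (by linarith)]
        nlinarith [norm_nonneg z₀]
      linarith
  · apply unbounded_of
    intro R
    set t : ℝ := max 1 ((|R| + 1) / ‖z₀‖) with htdef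
    have ht1 : 1 ≤ t := le_max_left _ _
    refine ⟨t • z₀, Or.inr ⟨t, ht1, rfl⟩, ?_⟩
    have h4 : ‖t • z₀‖ = t * ‖z₀‖ := by
      rw [norm_smul, Real.norm_eq_abs, abs_of_nonneg (by linarith)]
    have h3 : (|R| + 1) ≤ t * ‖z₀‖ := by
      calc |R| + 1 = ((|R| + 1) / ‖z₀‖) * ‖z₀‖ := by field_simp
      _ ≤ t * ‖z₀‖ := mul_le_mul_of_nonneg_right (le_max_right _ _) (norm_nonneg _)
    nlinarith [le_abs_self R]

end Stmt4Aux

open Stmt4Aux RealInnerProductSpace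

set_option maxHeartbeats 1000000

/-- a hyperbolically convex compact hypersurface homeomorphic to a sphere
satisfies the exterior horosphere condition. -/
theorem stmt4 (n : ℕ) (hn : 2 ≤ n) (Γ : Set (E n)) (hΓB : Γ ⊆ unitBall n)
    (hΓcpt : IsCompact Γ) (hΓsph : HomeoSphere Γ) (hconv : HypConvex Γ) :
    ExtHoroCond Γ := by
  intro p hp
  have hpB : ‖p‖ < 1 := by
    have := hΓB hp
    simpa [unitBall, mem_ball_zero_iff] using this
  have hp2 : ‖p‖ ^ 2 < 1 := by nlinarith [norm_nonneg p]
  rcases hconv p hp with ⟨v, hv0, hvp, hside⟩ | ⟨c, ρ, hρ, hc, hpc, hside⟩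
  · -- hyperplane case
    obtain ⟨w, hw0, hwp, hwΓ⟩ :
        ∃ w : E n, w ≠ 0 ∧ ⟪w, p⟫ = 0 ∧ ∀ q ∈ Γ, 0 ≤ ⟪w, q⟫ := by
      rcases hside with h | h
      · exact ⟨v, hv0, hvp, h⟩
      · refine ⟨-v, neg_ne_zero.mpr hv0, by simp [inner_neg_left, hvp], fun q hq => ?_⟩
        have := h q hq
        rw [inner_neg_left]
        linarith
    have hwn : (0:ℝ) < ‖w‖ := norm_pos_iff.mpr hw0
    set u : E n := ‖w‖⁻¹ • w with hudef
    clear_value u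
    have hun : ‖u‖ = 1 := by
      rw [hudef, norm_smul, norm_inv, norm_norm, inv_mul_cancel₀ (ne_of_gt hwn)]
    have huΓ : ∀ q ∈ Γ, 0 ≤ ⟪u, q⟫ := by
      intro q hq
      rw [hudef, real_inner_smul_left]
      exact mul_nonneg (by positivity) (hwΓ q hq)
    have hup : ⟪u, p⟫ = 0 := by
      rw [hudef, real_inner_smul_left, hwp, mul_zero]
    set s : ℝ := (1 - ‖p‖ ^ 2) / 2 with hsdef
    clear_value s
    have hs0 : 0 < s := by rw [hsdef]; linarith
    have hs1 : s < 1 := by rw [hsdef]; nlinarith [sq_nonneg ‖p‖]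
    have h1s : (0:ℝ) < 1 - s := by linarith
    set m : E n := p - s • u with hmdef
    clear_value m
    have hm2 : ‖m‖ ^ 2 = (1 - s) ^ 2 := by
      rw [hmdef, norm_sub_sq_real, real_inner_smul_right, real_inner_comm, hup,
        norm_smul, Real.norm_eq_abs, abs_of_pos hs0, hun]
      rw [hsdef]; ring
    have hm : ‖m‖ = 1 - s := eq_of_sq_eq (norm_nonneg m) (le_of_lt h1s) hm2
    have hum : ⟪u, m⟫ = -s := by
      rw [hmdef, inner_sub_right, hup, real_inner_smul_right,
        real_inner_self_eq_norm_sq, hun]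
      ring
    refine ⟨(1 - s)⁻¹ • m, s, ?_, hs0, hs1, ?_, ?_⟩
    · rw [norm_smul, Real.norm_eq_abs, abs_of_pos (inv_pos.mpr h1s), hm]
      field_simp
    · rw [smul_smul, mul_inv_cancel₀ (ne_of_gt h1s), one_smul]
      rw [hmdef]
      simp only [sub_sub_cancel]
      rw [norm_smul, Real.norm_eq_abs, abs_of_pos hs0, hun, mul_one]
    · rintro x ⟨hx1, hx2⟩
      rw [mem_setOf_eq, smul_smul, mul_inv_cancel₀ (ne_of_gt h1s), one_smul] at hx1
      have hxB : ‖x‖ < 1 := by simpa [unitBall, mem_ball_zero_iff] using hx2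
      have hux : ⟪u, x⟫ ≤ 0 := by
        have h1 : ⟪u, x - m⟫ ≤ s := by
          calc ⟪u, x - m⟫ ≤ ‖u‖ * ‖x - m‖ := real_inner_le_norm _ _
          _ ≤ s := by rw [hun, one_mul]; exact hx1
        have h2 : ⟪u, x - m⟫ = ⟪u, x⟫ - ⟪u, m⟫ := inner_sub_right u x m
        rw [hum] at h2
        linarith
      apply closure_step
      intro ε hε
      set t : ℝ := min (ε / 2) ((1 - ‖x‖) / 2) with htdef
      have ht0 : 0 < t := lt_min (by linarith) (by linarith)
      have htε : t < ε := lt_of_le_of_lt (min_le_left _ _) (by linarith)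
      have htx : t ≤ (1 - ‖x‖) / 2 := min_le_right _ _
      refine ⟨x - t • u, ?_, ?_⟩
      · simp only [sub_sub_cancel]
        rw [norm_smul, Real.norm_eq_abs, abs_of_pos ht0, hun, mul_one]
        exact htε
      · apply halfspace_good hun huΓ
        · rw [inner_sub_right, real_inner_smul_right, real_inner_self_eq_norm_sq, hun]
          nlinarith
        · simp only [unitBall, mem_ball_zero_iff]
          calc ‖x - t • u‖ ≤ ‖x‖ + ‖t • u‖ := norm_sub_le _ _
          _ = ‖x‖ + t := by
              rw [norm_smul, Real.norm_eq_abs, abs_of_pos ht0, hun, mul_one]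
          _ < 1 := by linarith
  · -- sphere cases
    set α : ℝ := ⟪p, c⟫ with hαdef
    clear_value α
    have hexp : ‖p - c‖ ^ 2 = ‖p‖ ^ 2 - 2 * α + ‖c‖ ^ 2 := by
      rw [hαdef]; exact norm_sub_sq_real p c
    have hpα : ‖p‖ ^ 2 = 2 * α - 1 := by
      rw [hpc, hc] at hexp; nlinarith
    have hδ0 : 0 < 1 - α := by nlinarith
    have hppc : ⟪p, p - c⟫ = α - 1 := by
      rw [inner_sub_right, real_inner_self_eq_norm_sq, hpα, hαdef]; ring
    have hρ0 : (ρ:ℝ) ≠ 0 := ne_of_gt hρ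
    rcases hside with hin | hout
    · -- Γ inside the sphere: exterior tangent horoball
      have hcle : ‖c‖ ≤ ρ + ‖p‖ := by
        calc ‖c‖ = ‖c - p + p‖ := by rw [sub_add_cancel]
        _ ≤ ‖c - p‖ + ‖p‖ := norm_add_le _ _
        _ = ρ + ‖p‖ := by rw [norm_sub_rev, hpc]
      have hδp : 1 - α ≤ ρ * ‖p‖ := by
        nlinarith [mul_nonneg (by linarith : (0:ℝ) ≤ ρ + ‖p‖ - ‖c‖)
          (by positivity : (0:ℝ) ≤ ρ + ‖p‖ + ‖c‖)]
      have hδρ : 1 - α < ρ := by nlinarith [norm_nonneg p]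
      have hden : 0 < ρ - (1 - α) := by linarith
      set s : ℝ := (1 - α) * ρ / (ρ - (1 - α)) with hsdef
      clear_value s
      have hs0 : 0 < s := by rw [hsdef]; exact div_pos (mul_pos hδ0 hρ) hden
      have hkey : s * (ρ - (1 - α)) = (1 - α) * ρ := by
        rw [hsdef]; exact div_mul_cancel₀ _ (ne_of_gt hden)
      have hr1 : ρ * (1 - ‖p‖) ≤ ρ - (1 - α) := by nlinarith
      have hr2 : s * (ρ * (1 - ‖p‖)) ≤ (1 - α) * ρ := by
        calc s * (ρ * (1 - ‖p‖)) ≤ s * (ρ - (1 - α)) :=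
              mul_le_mul_of_nonneg_left hr1 (le_of_lt hs0)
        _ = (1 - α) * ρ := hkey
      have hA : 0 < ρ * (1 - ‖p‖) := mul_pos hρ (by linarith)
      have hB : (1 - α) * ρ = (1 + ‖p‖) / 2 * (ρ * (1 - ‖p‖)) := by
        linear_combination (ρ / 2) * hpα
      have hs1 : s < 1 := by
        rw [hB] at hr2
        have hsle : s ≤ (1 + ‖p‖) / 2 := le_of_mul_le_mul_right hr2 hA
        linarith
      have h1s : (0:ℝ) < 1 - s := by linarith
      have hrs : 0 < ρ⁻¹ * s := mul_pos (inv_pos.mpr hρ) hs0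
      have hrs1 : (0:ℝ) < 1 + ρ⁻¹ * s := by linarith
      set m : E n := p + (ρ⁻¹ * s) • (p - c) with hmdef
      clear_value m
      have hm2 : ‖m‖ ^ 2 = (1 - s) ^ 2 := by
        rw [hmdef, norm_add_sq_real, real_inner_smul_right, hppc,
          norm_smul, Real.norm_eq_abs, abs_of_pos hrs, hpc, hpα]
        field_simp
        linear_combination 2 * hkey
      have hm : ‖m‖ = 1 - s := eq_of_sq_eq (norm_nonneg m) (le_of_lt h1s) hm2
      have hpm : ‖p - m‖ = s := by
        have e : p - m = -((ρ⁻¹ * s) • (p - c)) := by rw [hmdef]; abel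
        rw [e, norm_neg, norm_smul, Real.norm_eq_abs, abs_of_pos hrs, hpc]
        field_simp
      have hmc : ‖m - c‖ = ρ + s := by
        have e : m - c = (1 + ρ⁻¹ * s) • (p - c) := by
          rw [hmdef, add_smul, one_smul]; abel
        rw [e, norm_smul, Real.norm_eq_abs, abs_of_pos hrs1, hpc]
        field_simp
      refine ⟨(1 - s)⁻¹ • m, s, ?_, hs0, hs1, ?_, ?_⟩
      · rw [norm_smul, Real.norm_eq_abs, abs_of_pos (inv_pos.mpr h1s), hm]
        field_simp
      · rw [smul_smul, mul_inv_cancel₀ (ne_of_gt h1s), one_smul]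
        exact hpm
      · rintro x ⟨hx1, hx2⟩
        rw [mem_setOf_eq, smul_smul, mul_inv_cancel₀ (ne_of_gt h1s), one_smul] at hx1
        have hxB : ‖x‖ < 1 := by simpa [unitBall, mem_ball_zero_iff] using hx2
        have hxc : ρ ≤ ‖x - c‖ := by
          have h3 : dist m c ≤ dist m x + dist x c := dist_triangle m x c
          rw [dist_eq_norm, dist_eq_norm, dist_eq_norm, hmc, norm_sub_rev m x] at h3
          linarith
        apply closure_step
        intro ε hε
        have hxc0 : (0:ℝ) < ‖x - c‖ := lt_of_lt_of_le hρ hxc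
        set t : ℝ := min (ε / 2) ((1 - ‖x‖) / 2) with htdef
        have ht0 : 0 < t := lt_min (by linarith) (by linarith)
        have htε : t < ε := lt_of_le_of_lt (min_le_left _ _) (by linarith)
        have htx : t ≤ (1 - ‖x‖) / 2 := min_le_right _ _
        set y : E n := x + (t / ‖x - c‖) • (x - c) with hydef
        clear_value y
        have hnsm : ‖(t / ‖x - c‖) • (x - c)‖ = t := by
          rw [norm_smul, Real.norm_eq_abs, abs_of_pos (by positivity)]
          field_simp
        refine ⟨y, ?_, ?_⟩
        · have e : x - y = -((t / ‖x - c‖) • (x - c)) := by rw [hydef]; abel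
          rw [e, norm_neg, hnsm]; exact htε
        · have hyB : y ∈ unitBall n := by
            simp only [unitBall, mem_ball_zero_iff]
            rw [hydef]
            calc ‖x + (t / ‖x - c‖) • (x - c)‖ ≤ ‖x‖ + ‖(t / ‖x - c‖) • (x - c)‖ :=
              norm_add_le _ _
            _ = ‖x‖ + t := by rw [hnsm]
            _ < 1 := by linarith
          have hyc : ‖y - c‖ = ‖x - c‖ + t := by
            have e : y - c = (1 + t / ‖x - c‖) • (x - c) := by
              rw [hydef, add_smul, one_smul]; abel
            rw [e, norm_smul, Real.norm_eq_abs, abs_of_pos (by positivity)]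
            field_simp
          exact ray_good hρ.le hin (by rw [hyc]; linarith) hyB
    · -- Γ outside the sphere: interior tangent horoball
      have hc1 : 1 < ‖c‖ := by nlinarith [norm_nonneg c]
      have hden : 0 < ρ + (1 - α) := by linarith
      set s : ℝ := (1 - α) * ρ / (ρ + (1 - α)) with hsdef
      clear_value s
      have hs0 : 0 < s := by rw [hsdef]; exact div_pos (mul_pos hδ0 hρ) hden
      have hkey : s * (ρ + (1 - α)) = (1 - α) * ρ := by
        rw [hsdef]; exact div_mul_cancel₀ _ (ne_of_gt hden)
      have hδ1 : 1 - α ≤ 1 / 2 := by nlinarith [sq_nonneg ‖p‖]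
      have hs1 : s < 1 := by nlinarith
      have hsρ : s < ρ := by nlinarith
      have h1s : (0:ℝ) < 1 - s := by linarith
      have hrs : 0 < ρ⁻¹ * s := mul_pos (inv_pos.mpr hρ) hs0
      set m : E n := p - (ρ⁻¹ * s) • (p - c) with hmdef
      clear_value m
      have hm2 : ‖m‖ ^ 2 = (1 - s) ^ 2 := by
        rw [hmdef, norm_sub_sq_real, real_inner_smul_right, hppc,
          norm_smul, Real.norm_eq_abs, abs_of_pos hrs, hpc, hpα]
        field_simp
        linear_combination 2 * hkey
      have hm : ‖m‖ = 1 - s := eq_of_sq_eq (norm_nonneg m) (le_of_lt h1s) hm2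
      have hpm : ‖p - m‖ = s := by
        have e : p - m = (ρ⁻¹ * s) • (p - c) := by rw [hmdef]; abel
        rw [e, norm_smul, Real.norm_eq_abs, abs_of_pos hrs, hpc]
        field_simp
      have hmc : ‖m - c‖ = ρ - s := by
        have e : m - c = (1 - ρ⁻¹ * s) • (p - c) := by
          rw [hmdef, sub_smul, one_smul]; abel
        have hcoef : (0:ℝ) < 1 - ρ⁻¹ * s := by
          have : ρ⁻¹ * s < 1 := by
            rw [inv_mul_eq_div]
            exact (div_lt_one hρ).mpr hsρ
          linarith
        rw [e, norm_smul, Real.norm_eq_abs, abs_of_pos hcoef, hpc]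
        field_simp
      refine ⟨(1 - s)⁻¹ • m, s, ?_, hs0, hs1, ?_, ?_⟩
      · rw [norm_smul, Real.norm_eq_abs, abs_of_pos (inv_pos.mpr h1s), hm]
        field_simp
      · rw [smul_smul, mul_inv_cancel₀ (ne_of_gt h1s), one_smul]
        exact hpm
      · rintro x ⟨hx1, hx2⟩
        rw [mem_setOf_eq, smul_smul, mul_inv_cancel₀ (ne_of_gt h1s), one_smul] at hx1
        have hxB : ‖x‖ < 1 := by simpa [unitBall, mem_ball_zero_iff] using hx2
        have hxc : ‖x - c‖ ≤ ρ := by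
          have h3 : dist x c ≤ dist x m + dist m c := dist_triangle x m c
          rw [dist_eq_norm, dist_eq_norm, dist_eq_norm, hmc] at h3
          linarith
        have hxc0 : (0:ℝ) < ‖x - c‖ := by
          have h4 : ‖c‖ - ‖x‖ ≤ ‖x - c‖ := by
            rw [norm_sub_rev]
            exact norm_sub_norm_le c x
          linarith
        apply closure_step
        intro ε hε
        set t : ℝ := min (ε / 2) (min ((1 - ‖x‖) / 2) (‖x - c‖ / 2)) with htdef
        have ht0 : 0 < t := lt_min (by linarith) (lt_min (by linarith) (by linarith))
        have htε : t < ε := lt_of_le_of_lt (min_le_left _ _) (by linarith)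
        have htx : t ≤ (1 - ‖x‖) / 2 := le_trans (min_le_right _ _) (min_le_left _ _)
        have htc : t ≤ ‖x - c‖ / 2 := le_trans (min_le_right _ _) (min_le_right _ _)
        set y : E n := x + (t / ‖x - c‖) • (c - x) with hydef
        clear_value y
        have hnsm : ‖(t / ‖x - c‖) • (c - x)‖ = t := by
          have hcx : ‖c - x‖ ≠ 0 := by rw [norm_sub_rev]; exact ne_of_gt hxc0
          rw [norm_smul, Real.norm_eq_abs, abs_of_pos (by positivity), norm_sub_rev]
          exact div_mul_cancel₀ t hcx
        refine ⟨y, ?_, ?_⟩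
        · have e : x - y = -((t / ‖x - c‖) • (c - x)) := by rw [hydef]; abel
          rw [e, norm_neg, hnsm]; exact htε
        · have hyB : y ∈ unitBall n := by
            simp only [unitBall, mem_ball_zero_iff]
            rw [hydef]
            calc ‖x + (t / ‖x - c‖) • (c - x)‖ ≤ ‖x‖ + ‖(t / ‖x - c‖) • (c - x)‖ :=
              norm_add_le _ _
            _ = ‖x‖ + t := by rw [hnsm]
            _ < 1 := by linarith
          have hyc : ‖y - c‖ = ‖x - c‖ - t := by
            have e : y - c = (1 - t / ‖x - c‖) • (x - c) := by
              rw [hydef, sub_smul, one_smul]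
              rw [smul_sub, smul_sub]
              abel
            have hcoef : (0:ℝ) < 1 - t / ‖x - c‖ := by
              have : t / ‖x - c‖ < 1 := (div_lt_one hxc0).mpr (by linarith)
              linarith
            rw [e, norm_smul, Real.norm_eq_abs, abs_of_pos hcoef]
            field_simp
          exact inball_good hΓB hout hc1 hρ (by rw [hyc]; linarith) hyB

end
end

section
/- Let n ≥ 2 be an integer and r > 0. Then φ_r is Lebesgue integrable on the unbounded interval (r, ∞); in particular the n-dimensional half-catenoid in Hⁿ×ℝ has finite vertical height h⁺(r) = ∫_r^∞ φ_r(ξ) dξ < ∞. -/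
noncomputable section

open MeasureTheory Real Set

private lemma phir_meas (n : ℕ) (r : ℝ) : Measurable (phir n r) := by
  unfold phir
  exact measurable_const.div (Real.continuous_sqrt.comp (by continuity)).measurable

private lemma phir_nonneg (n : ℕ) {r : ℝ} (hr : 0 < r) (ξ : ℝ) : 0 ≤ phir n r ξ := by
  unfold phir
  have : 0 ≤ Real.sinh r := (Real.sinh_pos_iff.2 hr).le
  positivity

/-- Near `r`, lower bound for the expression under the square root. -/
private lemma near_lower (n : ℕ) (hn : 2 ≤ n) {r ξ : ℝ} (hr : 0 < r) (hξ : r < ξ) :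
    Real.sinh r ^ (2 * n - 3) * (ξ - r) ≤
      Real.sinh ξ ^ (2 * n - 2) - Real.sinh r ^ (2 * n - 2) := by
  have hb : 0 < Real.sinh r := Real.sinh_pos_iff.2 hr
  have hab : Real.sinh r < Real.sinh ξ := Real.sinh_lt_sinh.2 hξ
  have ha : 0 < Real.sinh ξ := hb.trans hab
  have hd : ξ - r ≤ Real.sinh ξ - Real.sinh r := by
    have key : ∀ x : ℝ, 0 ≤ x → x ≤ Real.sinh x := by
      intro x hx
      rcases eq_or_lt_of_le hx with h | h
      · simp [← h]
      · exact (Real.self_lt_sinh_iff.2 h).le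
    have h1 := key r hr.le
    have h2 := key ξ (hr.le.trans hξ.le)
    -- sinh ξ - sinh r ≥ ξ - r is NOT implied by those; use convexity identity instead
    -- sinh ξ - sinh r = 2 cosh((ξ+r)/2) sinh((ξ-r)/2)
    have hid : Real.sinh ξ - Real.sinh r
        = 2 * Real.sinh ((ξ - r) / 2) * Real.cosh ((ξ + r) / 2) := by
      have e1 : ξ = (ξ - r) / 2 + (ξ + r) / 2 := by ring
      have e2 : r = -((ξ - r) / 2) + (ξ + r) / 2 := by ring
      rw [e1, e2, Real.sinh_add, Real.sinh_add, Real.sinh_neg, Real.cosh_neg]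
      ring
    have h3 : (ξ - r) / 2 ≤ Real.sinh ((ξ - r) / 2) := key _ (by linarith)
    have h4 : (1 : ℝ) ≤ Real.cosh ((ξ + r) / 2) := Real.one_le_cosh _
    have h5 : 0 ≤ Real.sinh ((ξ - r) / 2) := le_trans (by linarith) h3
    nlinarith
  have hm : 2 * n - 2 = (2 * n - 3) + 1 := by omega
  have key2 : Real.sinh r ^ (2 * n - 3) * Real.sinh ξ ≤ Real.sinh ξ ^ (2 * n - 2) := by
    rw [hm, pow_succ]
    exact mul_le_mul_of_nonneg_right (pow_le_pow_left₀ hb.le hab.le _) ha.le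
  have h6 : Real.sinh r ^ (2 * n - 2) = Real.sinh r ^ (2 * n - 3) * Real.sinh r := by
    rw [hm, pow_succ]
  nlinarith [pow_pos hb (2 * n - 3)]

/-- On the tail, lower bound for the square root by an exponential. -/
private lemma tail_lower (n : ℕ) (hn : 2 ≤ n) {r ξ : ℝ} (hr : 0 < r) (hξ : r + 1 < ξ) :
    Real.exp ξ / (4 * Real.sqrt 2) ≤
      Real.sqrt (Real.sinh ξ ^ (2 * n - 2) - Real.sinh r ^ (2 * n - 2)) := by
  have hb : 0 < Real.sinh r := Real.sinh_pos_iff.2 hr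
  have he : (2 : ℝ) ≤ Real.exp 1 := by
    have := Real.add_one_le_exp (1 : ℝ); linarith
  have hcs : Real.sinh r ≤ Real.cosh r := by
    rw [Real.sinh_eq, Real.cosh_eq]
    have := Real.exp_pos (-r); linarith
  have hs1 : Real.exp 1 * Real.sinh r ≤ Real.sinh (r + 1) := by
    rw [Real.sinh_add, ← Real.cosh_add_sinh]
    have h1 : 0 ≤ Real.sinh 1 := (Real.sinh_pos_iff.2 one_pos).le
    nlinarith
  have hs2 : Real.sinh (r + 1) ≤ Real.sinh ξ := by
    exact (Real.sinh_lt_sinh.2 hξ).le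
  have h2b : 2 * Real.sinh r ≤ Real.sinh ξ := by nlinarith
  have ha : 0 < Real.sinh ξ := by nlinarith
  -- sinh r ^ m ≤ sinh ξ ^ m / 2
  have hm2 : 2 ≤ 2 * n - 2 := by omega
  have hpow : 2 * Real.sinh r ^ (2 * n - 2) ≤ Real.sinh ξ ^ (2 * n - 2) := by
    have h1 : (2 * Real.sinh r) ^ (2 * n - 2) ≤ Real.sinh ξ ^ (2 * n - 2) :=
      pow_le_pow_left₀ (by linarith) h2b _
    rw [mul_pow] at h1
    have h2 : (2 : ℝ) ^ 2 ≤ (2 : ℝ) ^ (2 * n - 2) :=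
      pow_le_pow_right₀ one_le_two hm2
    have h3 : 0 ≤ Real.sinh r ^ (2 * n - 2) := by positivity
    nlinarith
  have hD : Real.sinh ξ ^ (2 * n - 2) / 2
      ≤ Real.sinh ξ ^ (2 * n - 2) - Real.sinh r ^ (2 * n - 2) := by linarith
  have hsq : Real.sqrt (Real.sinh ξ ^ (2 * n - 2) / 2)
      ≤ Real.sqrt (Real.sinh ξ ^ (2 * n - 2) - Real.sinh r ^ (2 * n - 2)) :=
    Real.sqrt_le_sqrt hD
  have heq : Real.sqrt (Real.sinh ξ ^ (2 * n - 2) / 2)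
      = Real.sinh ξ ^ (n - 1) / Real.sqrt 2 := by
    rw [Real.sqrt_div (by positivity) 2, show 2 * n - 2 = (n - 1) * 2 by omega, pow_mul,
      Real.sqrt_sq (by positivity)]
  -- exp ξ / 4 ≤ sinh ξ ≤ sinh ξ ^ (n-1)
  have hξ1 : (1 : ℝ) < ξ := by linarith
  have hex : Real.exp 1 < Real.exp ξ := Real.exp_lt_exp.2 hξ1
  have hexi : Real.exp (-ξ) * Real.exp ξ = 1 := by
    rw [← Real.exp_add]; simp
  have hexpos : 0 < Real.exp ξ := Real.exp_pos _
  have hexn : Real.exp (-ξ) ≤ 1 / 2 := by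
    have h0 : 0 < Real.exp (-ξ) := Real.exp_pos _
    nlinarith
  have hsinh_lb : Real.exp ξ / 4 ≤ Real.sinh ξ := by
    rw [Real.sinh_eq]
    nlinarith
  have h1s : (1 : ℝ) ≤ Real.sinh ξ := by
    have h9 : (2.7182818283 : ℝ) < Real.exp 1 := Real.exp_one_gt_d9
    rw [Real.sinh_eq]
    nlinarith
  have hps : Real.sinh ξ ≤ Real.sinh ξ ^ (n - 1) :=
    le_self_pow₀ h1s (by omega)
  have hfinal : Real.exp ξ / (4 * Real.sqrt 2) ≤ Real.sinh ξ ^ (n - 1) / Real.sqrt 2 := by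
    rw [show Real.exp ξ / (4 * Real.sqrt 2) = Real.exp ξ / 4 / Real.sqrt 2 from by
      rw [div_div]]
    gcongr
    linarith
  calc Real.exp ξ / (4 * Real.sqrt 2) ≤ Real.sinh ξ ^ (n - 1) / Real.sqrt 2 := hfinal
    _ = Real.sqrt (Real.sinh ξ ^ (2 * n - 2) / 2) := heq.symm
    _ ≤ _ := hsq

/-- `φ_r` is integrable on `(r, ∞)`: the half-catenoid has finite height. -/
theorem stmt8 (n : ℕ) (hn : 2 ≤ n) (r : ℝ) (hr : 0 < r) :
    MeasureTheory.IntegrableOn (phir n r) (Set.Ioi r) := by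
  have hb : 0 < Real.sinh r := Real.sinh_pos_iff.2 hr
  have hA : 0 ≤ Real.sinh r ^ (n - 1) := by positivity
  have hsplit : Set.Ioi r = Set.Ioc r (r + 1) ∪ Set.Ioi (r + 1) :=
    (Set.Ioc_union_Ioi_eq_Ioi (by linarith)).symm
  rw [hsplit]
  apply MeasureTheory.IntegrableOn.union
  · -- near r : dominate by C₁ * (ξ - r) ^ (-1/2)
    set C1 : ℝ := Real.sinh r ^ (n - 1) / Real.sqrt (Real.sinh r ^ (2 * n - 3)) with hC1
    have hg : MeasureTheory.IntegrableOn
        (fun ξ : ℝ => C1 * (ξ - r) ^ (-(1 / 2) : ℝ)) (Set.Ioc r (r + 1)) := by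
      have h1 : IntervalIntegrable (fun x : ℝ => x ^ (-(1 / 2) : ℝ)) volume 0 1 :=
        intervalIntegral.intervalIntegrable_rpow' (by norm_num)
      have h2 := h1.comp_sub_right r
      rw [zero_add] at h2
      have h3 : MeasureTheory.IntegrableOn
          (fun x : ℝ => (x - r) ^ (-(1 / 2) : ℝ)) (Set.Ioc r (1 + r)) :=
        (intervalIntegrable_iff_integrableOn_Ioc_of_le (by linarith)).1 h2
      rw [show (1 : ℝ) + r = r + 1 by ring] at h3
      exact h3.const_mul C1
    refine hg.integrable.mono (phir_meas n r).aestronglyMeasurable ?_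
    rw [MeasureTheory.ae_restrict_iff' measurableSet_Ioc]
    filter_upwards with ξ hξ
    obtain ⟨hξ1, hξ2⟩ := hξ
    have hnear := near_lower n hn hr hξ1
    have hden : 0 < Real.sinh r ^ (2 * n - 3) * (ξ - r) := by
      have : 0 < ξ - r := by linarith
      positivity
    have hphir : phir n r ξ ≤ C1 * (ξ - r) ^ (-(1 / 2) : ℝ) := by
      have hsq : Real.sqrt (Real.sinh r ^ (2 * n - 3) * (ξ - r))
          ≤ Real.sqrt (Real.sinh ξ ^ (2 * n - 2) - Real.sinh r ^ (2 * n - 2)) :=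
        Real.sqrt_le_sqrt hnear
      have hsqpos : 0 < Real.sqrt (Real.sinh r ^ (2 * n - 3) * (ξ - r)) :=
        Real.sqrt_pos.2 hden
      have h4 : phir n r ξ
          ≤ Real.sinh r ^ (n - 1) / Real.sqrt (Real.sinh r ^ (2 * n - 3) * (ξ - r)) := by
        unfold phir
        gcongr
      have h5 : Real.sinh r ^ (n - 1) / Real.sqrt (Real.sinh r ^ (2 * n - 3) * (ξ - r))
          = C1 * (ξ - r) ^ (-(1 / 2) : ℝ) := by
        rw [Real.rpow_neg (by linarith), ← Real.sqrt_eq_rpow,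
          Real.sqrt_mul (by positivity) (ξ - r), hC1]
        field_simp
      linarith
    rw [Real.norm_of_nonneg (phir_nonneg n hr ξ)]
    calc phir n r ξ ≤ C1 * (ξ - r) ^ (-(1 / 2) : ℝ) := hphir
      _ ≤ ‖C1 * (ξ - r) ^ (-(1 / 2) : ℝ)‖ := le_abs_self _
  · -- tail : dominate by C₂ * exp (-ξ)
    set C2 : ℝ := Real.sinh r ^ (n - 1) * (4 * Real.sqrt 2) with hC2
    have hg : MeasureTheory.IntegrableOn
        (fun ξ : ℝ => C2 * Real.exp (-1 * ξ)) (Set.Ioi (r + 1)) :=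
      (exp_neg_integrableOn_Ioi (r + 1) one_pos).const_mul C2
    refine hg.integrable.mono (phir_meas n r).aestronglyMeasurable ?_
    rw [MeasureTheory.ae_restrict_iff' measurableSet_Ioi]
    filter_upwards with ξ hξ
    have htail := tail_lower n hn hr hξ
    have hexpos : 0 < Real.exp ξ := Real.exp_pos _
    have hqpos : 0 < Real.exp ξ / (4 * Real.sqrt 2) := by positivity
    have h4 : phir n r ξ
        ≤ Real.sinh r ^ (n - 1) / (Real.exp ξ / (4 * Real.sqrt 2)) := by
      unfold phir
      gcongr
    have h5 : Real.sinh r ^ (n - 1) / (Real.exp ξ / (4 * Real.sqrt 2))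
        = C2 * Real.exp (-1 * ξ) := by
      rw [show (-1 : ℝ) * ξ = -ξ by ring, Real.exp_neg, hC2]
      field_simp
    rw [Real.norm_of_nonneg (phir_nonneg n hr ξ)]
    calc phir n r ξ ≤ C2 * Real.exp (-1 * ξ) := by rw [← h5]; exact h4
      _ ≤ ‖C2 * Real.exp (-1 * ξ)‖ := le_abs_self _

end
end

section
/- Let n ≥ 2 be an integer. The function r ↦ h⁺(r) = ∫_r^∞ φ_r(ξ) dξ is strictly increasing on (0, ∞); moreover h⁺(r) → 0 as r → 0⁺ and h⁺(r) → π/(2(n−1)) as r → +∞. -/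
noncomputable section

open MeasureTheory Real Set

/-! ### Auxiliary material for `stmt10` -/

/-- The integrand after the substitution `ξ = arsinh (sinh r · y)`. -/
def Fint (n : ℕ) (a y : ℝ) : ℝ :=
  a / (Real.sqrt (y ^ (2 * n - 2) - 1) * Real.sqrt (1 + (a * y) ^ 2))

/-- The dominating function `G(y) = 1/(y √(y^(2n−2) − 1))`. -/
def Gint (n : ℕ) (y : ℝ) : ℝ := 1 / (y * Real.sqrt (y ^ (2 * n - 2) - 1))

lemma one_lt_pow_aux {n : ℕ} (hn : 2 ≤ n) {y : ℝ} (hy : 1 < y) :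
    1 < y ^ (2 * n - 2) := by
  apply one_lt_pow₀ hy
  omega

lemma sqrt_pow_pos {n : ℕ} (hn : 2 ≤ n) {y : ℝ} (hy : 1 < y) :
    0 < Real.sqrt (y ^ (2 * n - 2) - 1) :=
  Real.sqrt_pos.2 (by linarith [one_lt_pow_aux hn hy])

lemma sqrt_one_add_pos (a y : ℝ) : 0 < Real.sqrt (1 + (a * y) ^ 2) :=
  Real.sqrt_pos.2 (by positivity)

lemma Fint_pos {n : ℕ} (hn : 2 ≤ n) {a y : ℝ} (ha : 0 < a) (hy : 1 < y) :
    0 < Fint n a y :=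
  div_pos ha (mul_pos (sqrt_pow_pos hn hy) (sqrt_one_add_pos a y))

/-- Rewriting `Fint` so the dependence on `a` is via `(a²)⁻¹`. -/
lemma Fint_eq {n : ℕ} (hn : 2 ≤ n) {a y : ℝ} (ha : 0 < a) (hy : 1 < y) :
    Fint n a y =
      (Real.sqrt (y ^ (2 * n - 2) - 1) * Real.sqrt ((a ^ 2)⁻¹ + y ^ 2))⁻¹ := by
  have h1 : Real.sqrt ((a ^ 2)⁻¹ + y ^ 2) * a = Real.sqrt (1 + (a * y) ^ 2) := by
    rw [← Real.sqrt_sq ha.le, ← Real.sqrt_mul (by positivity)]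
    congr 1
    field_simp
    rw [Real.sq_sqrt (sq_nonneg a)]
  have h2 : Real.sqrt ((a ^ 2)⁻¹ + y ^ 2) = Real.sqrt (1 + (a * y) ^ 2) / a := by
    rw [eq_div_iff ha.ne', h1]
  have ht := sqrt_one_add_pos a y
  have hs := sqrt_pow_pos hn hy
  rw [Fint, h2]
  field_simp


lemma Fint_le_Gint {n : ℕ} (hn : 2 ≤ n) {a y : ℝ} (ha : 0 < a) (hy : 1 < y) :
    Fint n a y ≤ Gint n y := by
  have hy0 : 0 < y := lt_trans one_pos hy
  have hs := sqrt_pow_pos hn hy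
  rw [Fint_eq hn ha hy, Gint, one_div, mul_comm y]
  have hyy : y ≤ Real.sqrt ((a ^ 2)⁻¹ + y ^ 2) := by
    calc y = Real.sqrt (y ^ 2) := (Real.sqrt_sq hy0.le).symm
    _ ≤ Real.sqrt ((a ^ 2)⁻¹ + y ^ 2) :=
      Real.sqrt_le_sqrt (le_add_of_nonneg_left (by positivity))
  exact inv_anti₀ (mul_pos hs hy0) (mul_le_mul_of_nonneg_left hyy hs.le)

lemma Fint_strictMono {n : ℕ} (hn : 2 ≤ n) {a b y : ℝ} (ha : 0 < a)
    (hab : a < b) (hy : 1 < y) : Fint n a y < Fint n b y := by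
  have hb : 0 < b := lt_trans ha hab
  have hy0 : 0 < y := lt_trans one_pos hy
  have hs := sqrt_pow_pos hn hy
  rw [Fint_eq hn ha hy, Fint_eq hn hb hy]
  apply inv_strictAnti₀
  · apply mul_pos hs (Real.sqrt_pos.2 (by positivity))
  · apply mul_lt_mul_of_pos_left _ hs
    apply Real.sqrt_lt_sqrt (by positivity)
    have : (b ^ 2)⁻¹ < (a ^ 2)⁻¹ := by
      apply inv_strictAnti₀ (by positivity)
      exact pow_lt_pow_left₀ hab ha.le two_ne_zero
    linarith

lemma Fint_continuousOn {n : ℕ} (hn : 2 ≤ n) (a : ℝ) :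
    ContinuousOn (Fint n a) (Set.Ioi 1) := by
  apply ContinuousOn.div continuousOn_const
  · apply Continuous.continuousOn
    exact (Real.continuous_sqrt.comp (by continuity)).mul
      (Real.continuous_sqrt.comp (by continuity))
  · intro y hy
    exact (mul_pos (sqrt_pow_pos hn hy) (sqrt_one_add_pos a y)).ne'

/-- `Gint` is integrable on `(1,∞)` with integral `π/(2(n−1))`. -/
lemma Gint_hasDerivAt {n : ℕ} (hn : 2 ≤ n) {y : ℝ} (hy : 1 < y) :
    HasDerivAt (fun z => ((n : ℝ) - 1)⁻¹ * Real.arctan (Real.sqrt (z ^ (2 * n - 2) - 1)))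
      (Gint n y) y := by
  have hy0 : 0 < y := lt_trans one_pos hy
  have hu : (0:ℝ) < y ^ (2 * n - 2) - 1 := by linarith [one_lt_pow_aux hn hy]
  have hs : 0 < Real.sqrt (y ^ (2 * n - 2) - 1) := Real.sqrt_pos.2 hu
  have h1 : HasDerivAt (fun z : ℝ => z ^ (2 * n - 2) - 1)
      ((2 * n - 2 : ℕ) * y ^ (2 * n - 2 - 1)) y :=
    (hasDerivAt_pow (2 * n - 2) y).sub_const 1
  have h2 : HasDerivAt (fun z : ℝ => Real.sqrt (z ^ (2 * n - 2) - 1))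
      (1 / (2 * Real.sqrt (y ^ (2 * n - 2) - 1)) *
        ((2 * n - 2 : ℕ) * y ^ (2 * n - 2 - 1))) y :=
    (Real.hasDerivAt_sqrt hu.ne').comp y h1
  have h3 := (Real.hasDerivAt_arctan (Real.sqrt (y ^ (2 * n - 2) - 1))).comp y h2
  have h4 := h3.const_mul ((n : ℝ) - 1)⁻¹
  refine HasDerivAt.congr_deriv h4 ?_
  have hsq : Real.sqrt (y ^ (2 * n - 2) - 1) ^ 2 = y ^ (2 * n - 2) - 1 :=
    Real.sq_sqrt hu.le
  have hn1 : ((n : ℝ) - 1) ≠ 0 := by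
    have : (2:ℝ) ≤ (n : ℝ) := by exact_mod_cast hn
    linarith
  have hpow : y ^ (2 * n - 2) = y ^ (2 * n - 2 - 1) * y := by
    rw [← pow_succ]
    congr 1
    omega
  have hcast : ((2 * n - 2 : ℕ) : ℝ) = 2 * ((n : ℝ) - 1) := by
    have : (2 * n - 2 : ℕ) = 2 * (n - 1) := by omega
    rw [this]
    push_cast [Nat.cast_sub (by omega : 1 ≤ n)]
    ring
  rw [Gint, hsq, hcast]
  have hyp : (0:ℝ) < y ^ (2 * n - 2) := by positivity
  have hyp1 : (0:ℝ) < y ^ (2 * n - 2 - 1) := by positivity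
  field_simp
  rw [hpow]
  ring

lemma Gint_nonneg {n : ℕ} (y : ℝ) (hy : 1 < y) : 0 ≤ Gint n y := by
  have : (0:ℝ) < y := lt_trans one_pos hy
  rw [Gint]
  positivity

lemma tendsto_sqrt_atTop : Filter.Tendsto Real.sqrt Filter.atTop Filter.atTop := by
  apply Filter.tendsto_atTop_atTop.2
  intro b
  exact ⟨b ^ 2, fun a ha => by
    calc b ≤ |b| := le_abs_self b
    _ = Real.sqrt (b ^ 2) := (Real.sqrt_sq_eq_abs b).symm
    _ ≤ Real.sqrt a := Real.sqrt_le_sqrt ha⟩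

lemma Gint_aux_tendsto {n : ℕ} (hn : 2 ≤ n) :
    Filter.Tendsto
      (fun z => ((n : ℝ) - 1)⁻¹ * Real.arctan (Real.sqrt (z ^ (2 * n - 2) - 1)))
      Filter.atTop (nhds (((n : ℝ) - 1)⁻¹ * (π / 2))) := by
  apply Filter.Tendsto.const_mul
  have h1 : Filter.Tendsto (fun z : ℝ => z ^ (2 * n - 2) - 1) Filter.atTop Filter.atTop := by
    apply Filter.tendsto_atTop_add_const_right
    exact Filter.tendsto_pow_atTop (by omega)
  have h2 := _root_.tendsto_sqrt_atTop.comp h1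
  exact (tendsto_nhds_of_tendsto_nhdsWithin Real.tendsto_arctan_atTop).comp h2

lemma Gint_cont_within {n : ℕ} :
    ContinuousWithinAt
      (fun z => ((n : ℝ) - 1)⁻¹ * Real.arctan (Real.sqrt (z ^ (2 * n - 2) - 1)))
      (Set.Ici 1) 1 := by
  apply Continuous.continuousWithinAt
  exact continuous_const.mul (Real.continuous_arctan.comp
    (Real.continuous_sqrt.comp (by continuity)))

lemma Gint_integrableOn {n : ℕ} (hn : 2 ≤ n) :
    MeasureTheory.IntegrableOn (Gint n) (Set.Ioi 1) :=
  integrableOn_Ioi_deriv_of_nonneg Gint_cont_within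
    (fun y hy => Gint_hasDerivAt hn hy) (fun y hy => Gint_nonneg y hy)
    (Gint_aux_tendsto hn)

lemma Gint_integral {n : ℕ} (hn : 2 ≤ n) :
    ∫ y in Set.Ioi 1, Gint n y = π / (2 * ((n : ℝ) - 1)) := by
  rw [integral_Ioi_of_hasDerivAt_of_tendsto Gint_cont_within
    (fun y hy => Gint_hasDerivAt hn hy) (Gint_integrableOn hn) (Gint_aux_tendsto hn)]
  have : ((1:ℝ) ^ (2 * n - 2) - 1) = 0 := by simp
  rw [this, Real.sqrt_zero, Real.arctan_zero, mul_zero, sub_zero]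
  have hn1 : ((n : ℝ) - 1) ≠ 0 := by
    have : (2:ℝ) ≤ (n : ℝ) := by exact_mod_cast hn
    linarith
  rw [← div_div, div_eq_mul_inv (π/2), mul_comm]

lemma Fint_integrableOn {n : ℕ} (hn : 2 ≤ n) {a : ℝ} (ha : 0 < a) :
    MeasureTheory.IntegrableOn (Fint n a) (Set.Ioi 1) := by
  apply MeasureTheory.Integrable.mono' (Gint_integrableOn hn)
    ((Fint_continuousOn hn a).aestronglyMeasurable measurableSet_Ioi)
  rw [MeasureTheory.ae_restrict_iff' measurableSet_Ioi]
  apply MeasureTheory.ae_of_all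
  intro y hy
  rw [Real.norm_eq_abs, abs_of_nonneg (Fint_pos hn ha hy).le]
  exact Fint_le_Gint hn ha hy

/-- The change-of-variables formula: `hplus n r = ∫_{(1,∞)} Fint n (sinh r)`. -/
lemma hplus_eq {n : ℕ} (hn : 2 ≤ n) {r : ℝ} (hr : 0 < r) :
    hplus n r = ∫ y in Set.Ioi 1, Fint n (Real.sinh r) y := by
  set a := Real.sinh r with ha_def
  have ha : 0 < a := Real.sinh_pos_iff.2 hr
  set f : ℝ → ℝ := fun y => Real.arsinh (a * y) with hf_def
  set f' : ℝ → ℝ := fun y => (Real.sqrt (1 + (a * y) ^ 2))⁻¹ * a with hf'_def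
  have hderiv : ∀ y ∈ Set.Ioi (1:ℝ), HasDerivWithinAt f (f' y) (Set.Ioi 1) y := by
    intro y _
    have h1 : HasDerivAt (fun z : ℝ => a * z) a y := by
      simpa using (hasDerivAt_id y).const_mul a
    exact ((Real.hasDerivAt_arsinh (a * y)).comp y h1).hasDerivWithinAt
  have hinj : Set.InjOn f (Set.Ioi 1) := by
    intro y1 _ y2 _ h
    have := Real.arsinh_injective h
    exact mul_left_cancel₀ ha.ne' this
  have himg : f '' Set.Ioi 1 = Set.Ioi r := by
    ext ξ
    simp only [Set.mem_image, Set.mem_Ioi]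
    constructor
    · rintro ⟨y, hy, rfl⟩
      have : a * 1 < a * y := by nlinarith
      calc r = Real.arsinh (Real.sinh r) := (Real.arsinh_sinh r).symm
      _ = Real.arsinh (a * 1) := by rw [mul_one]
      _ < Real.arsinh (a * y) := Real.arsinh_lt_arsinh.2 this
    · intro hξ
      refine ⟨Real.sinh ξ / a, ?_, ?_⟩
      · rw [lt_div_iff₀ ha, one_mul]
        exact Real.sinh_lt_sinh.2 hξ
      · show Real.arsinh (a * (Real.sinh ξ / a)) = ξ
        rw [mul_div_cancel₀ _ ha.ne', Real.arsinh_sinh]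
  have key : ∀ y ∈ Set.Ioi (1:ℝ), |f' y| • phir n r (f y) = Fint n a y := by
    intro y hy
    have hy1 : (1:ℝ) < y := hy
    have hy0 : 0 < y := lt_trans one_pos hy1
    have hf'nn : 0 ≤ f' y := by
      rw [hf'_def]
      positivity
    have hsinh : Real.sinh (f y) = a * y := Real.sinh_arsinh (a * y)
    have hsq : Real.sqrt ((a * y) ^ (2 * n - 2) - a ^ (2 * n - 2)) =
        a ^ (n - 1) * Real.sqrt (y ^ (2 * n - 2) - 1) := by
      have hpow : a ^ (2 * n - 2) = (a ^ (n - 1)) ^ 2 := by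
        rw [← pow_mul]
        congr 1
        omega
      have : (a * y) ^ (2 * n - 2) - a ^ (2 * n - 2) =
          (a ^ (n - 1)) ^ 2 * (y ^ (2 * n - 2) - 1) := by
        rw [mul_pow, hpow]
        ring
      rw [this, Real.sqrt_mul (sq_nonneg _), Real.sqrt_sq (by positivity)]
    have hs := sqrt_pow_pos hn hy1
    have ht := sqrt_one_add_pos a y
    have hap : (0:ℝ) < a ^ (n - 1) := by positivity
    rw [smul_eq_mul, abs_of_nonneg hf'nn, phir, hsinh, ← ha_def, hsq, hf'_def, Fint]
    field_simp
  rw [hplus, ← himg,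
    MeasureTheory.integral_image_eq_integral_abs_deriv_smul measurableSet_Ioi hderiv hinj]
  exact MeasureTheory.setIntegral_congr_fun measurableSet_Ioi key

lemma tendsto_sinh_atTop : Filter.Tendsto Real.sinh Filter.atTop Filter.atTop := by
  apply Filter.tendsto_atTop_mono' _ _ Filter.tendsto_id
  filter_upwards [Filter.eventually_ge_atTop (0:ℝ)] with x hx
  exact Real.self_le_sinh_iff.2 hx

/-- Pointwise limit at `+∞`: `Fint n a y → Gint n y` as `a → ∞`. -/
lemma Fint_tendsto_Gint {n : ℕ} (hn : 2 ≤ n) {y : ℝ} (hy : 1 < y) :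
    Filter.Tendsto (fun a => Fint n a y) Filter.atTop (nhds (Gint n y)) := by
  have hy0 : 0 < y := lt_trans one_pos hy
  have hs := sqrt_pow_pos hn hy
  have hcont : Filter.Tendsto
      (fun u : ℝ => (Real.sqrt (y ^ (2 * n - 2) - 1) * Real.sqrt (u + y ^ 2))⁻¹)
      (nhds 0) (nhds (Gint n y)) := by
    have hC : ContinuousAt
        (fun u : ℝ => (Real.sqrt (y ^ (2 * n - 2) - 1) * Real.sqrt (u + y ^ 2))⁻¹) 0 := by
      apply ContinuousAt.inv₀
      · exact (continuousAt_const.mul ((Real.continuous_sqrt.continuousAt).comp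
          (by fun_prop)))
      · simp only [zero_add, Real.sqrt_sq hy0.le]
        positivity
    have := hC.tendsto
    simpa [zero_add, Real.sqrt_sq hy0.le, Gint, one_div, mul_comm] using this
  have hinv : Filter.Tendsto (fun a : ℝ => (a ^ 2)⁻¹) Filter.atTop (nhds 0) :=
    (Filter.tendsto_pow_atTop two_ne_zero).inv_tendsto_atTop
  have := hcont.comp hinv
  apply this.congr'
  filter_upwards [Filter.eventually_gt_atTop (0:ℝ)] with a ha
  exact (Fint_eq hn ha hy).symm

/-- `h⁺` is strictly increasing on `(0,∞)`, tends to `0` at `0⁺`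
and to `π/(2(n−1))` at `+∞`. -/
theorem stmt10 (n : ℕ) (hn : 2 ≤ n) :
    StrictMonoOn (hplus n) (Set.Ioi 0) ∧
    Filter.Tendsto (hplus n) (nhdsWithin 0 (Set.Ioi 0)) (nhds 0) ∧
    Filter.Tendsto (hplus n) Filter.atTop (nhds (π / (2 * ((n : ℝ) - 1)))) := by
  refine ⟨?_, ?_, ?_⟩
  · -- strict monotonicity
    intro r₁ hr₁ r₂ hr₂ h12
    have hr₁' : (0:ℝ) < r₁ := hr₁
    have hr₂' : (0:ℝ) < r₂ := hr₂
    have ha₁ : 0 < Real.sinh r₁ := Real.sinh_pos_iff.2 hr₁'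
    have hab : Real.sinh r₁ < Real.sinh r₂ := Real.sinh_lt_sinh.2 h12
    have hint₁ := Fint_integrableOn hn ha₁
    have hint₂ := Fint_integrableOn hn (lt_trans ha₁ hab)
    rw [hplus_eq hn hr₁', hplus_eq hn hr₂']
    have hsub : 0 < ∫ y in Set.Ioi 1,
        (Fint n (Real.sinh r₂) y - Fint n (Real.sinh r₁) y) := by
      rw [MeasureTheory.setIntegral_pos_iff_support_of_nonneg_ae]
      · have hsup : Set.Ioi (1:ℝ) ⊆
            Function.support (fun y => Fint n (Real.sinh r₂) y - Fint n (Real.sinh r₁) y) :=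
          fun y hy => (sub_pos.2 (Fint_strictMono hn ha₁ hab hy)).ne'
        calc (0 : ENNReal) < volume (Set.Ioi (1:ℝ)) := by
              rw [Real.volume_Ioi]; exact ENNReal.zero_lt_top
        _ ≤ volume (Function.support
              (fun y => Fint n (Real.sinh r₂) y - Fint n (Real.sinh r₁) y) ∩ Set.Ioi 1) :=
            measure_mono (Set.subset_inter hsup subset_rfl)
      · filter_upwards [MeasureTheory.ae_restrict_mem measurableSet_Ioi] with y hy
        simpa using (Fint_strictMono hn ha₁ hab hy).le
      · exact hint₂.sub hint₁
    have heq := MeasureTheory.integral_sub hint₂ hint₁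
    rw [heq] at hsub
    linarith
  · -- limit at `0⁺`
    have hDCT := MeasureTheory.tendsto_integral_filter_of_dominated_convergence
      (μ := volume.restrict (Set.Ioi 1)) (l := nhdsWithin 0 (Set.Ioi 0))
      (F := fun r y => Fint n (Real.sinh r) y) (f := fun _ => (0:ℝ)) (Gint n)
      (Filter.Eventually.of_forall fun r =>
        (Fint_continuousOn hn _).aestronglyMeasurable measurableSet_Ioi)
      (by
        filter_upwards [self_mem_nhdsWithin] with r hr
        rw [MeasureTheory.ae_restrict_iff' measurableSet_Ioi]
        refine MeasureTheory.ae_of_all _ fun y hy => ?_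
        have ha : 0 < Real.sinh r := Real.sinh_pos_iff.2 hr
        rw [Real.norm_eq_abs, abs_of_nonneg (Fint_pos hn ha hy).le]
        exact Fint_le_Gint hn ha hy)
      (Gint_integrableOn hn)
      (by
        rw [MeasureTheory.ae_restrict_iff' measurableSet_Ioi]
        refine MeasureTheory.ae_of_all _ fun y hy => ?_
        have hs := sqrt_pow_pos hn hy
        have hC : ContinuousAt (fun a : ℝ => Fint n a y) 0 := by
          apply ContinuousAt.div continuousAt_id
          · exact (continuous_const.mul
              (Real.continuous_sqrt.comp (by continuity))).continuousAt
          · simpa using hs.ne'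
        have h2 : Filter.Tendsto (fun a : ℝ => Fint n a y) (nhds 0) (nhds 0) := by
          have := hC.tendsto
          simpa [Fint] using this
        have h1 : Filter.Tendsto Real.sinh (nhdsWithin 0 (Set.Ioi 0)) (nhds 0) := by
          have h := (Real.continuous_sinh.tendsto 0).mono_left
            (nhdsWithin_le_nhds (s := Set.Ioi 0))
          simpa using h
        exact h2.comp h1)
    rw [MeasureTheory.integral_zero] at hDCT
    apply hDCT.congr'
    filter_upwards [self_mem_nhdsWithin] with r hr
    exact (hplus_eq hn hr).symm
  · -- limit at `+∞`
    have hDCT := MeasureTheory.tendsto_integral_filter_of_dominated_convergence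
      (μ := volume.restrict (Set.Ioi 1)) (l := Filter.atTop)
      (F := fun r y => Fint n (Real.sinh r) y) (f := Gint n) (Gint n)
      (Filter.Eventually.of_forall fun r =>
        (Fint_continuousOn hn _).aestronglyMeasurable measurableSet_Ioi)
      (by
        filter_upwards [Filter.eventually_gt_atTop (0:ℝ)] with r hr
        rw [MeasureTheory.ae_restrict_iff' measurableSet_Ioi]
        refine MeasureTheory.ae_of_all _ fun y hy => ?_
        have ha : 0 < Real.sinh r := Real.sinh_pos_iff.2 hr
        rw [Real.norm_eq_abs, abs_of_nonneg (Fint_pos hn ha hy).le]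
        exact Fint_le_Gint hn ha hy)
      (Gint_integrableOn hn)
      (by
        rw [MeasureTheory.ae_restrict_iff' measurableSet_Ioi]
        refine MeasureTheory.ae_of_all _ fun y hy => ?_
        exact (Fint_tendsto_Gint hn hy).comp tendsto_sinh_atTop)
    rw [Gint_integral hn] at hDCT
    apply hDCT.congr'
    filter_upwards [Filter.eventually_gt_atTop (0:ℝ)] with r hr
    exact (hplus_eq hn hr).symm

end
end

section
/- Let n ≥ 2 be an integer and let 0 < r₁ < r₂. Then there exists exactly one ρ ∈ [r₂, ∞) such that g_{r₁}(ρ) = g_{r₂}(ρ), and moreover ρ > r₂; that is, the generating curves of the half-catenoids of necks r₁ and r₂ intersect at one unique point. -/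
noncomputable section

open MeasureTheory Real Set

namespace Cat

/-- The substituted integrand. -/
def psi (n : ℕ) (s t : ℝ) : ℝ :=
  s / (Real.sqrt (t ^ (2 * n - 2) - 1) * Real.sqrt (1 + s ^ 2 * t ^ 2))

lemma den_pos {n : ℕ} (hn : 2 ≤ n) {r ξ : ℝ} (hr : 0 < r) (h : r < ξ) :
    0 < Real.sinh ξ ^ (2 * n - 2) - Real.sinh r ^ (2 * n - 2) := by
  have h1 : Real.sinh r < Real.sinh ξ := Real.sinh_lt_sinh.2 h
  have h2 : (0:ℝ) < Real.sinh r := Real.sinh_pos_iff.2 hr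
  have := pow_lt_pow_left₀ h1 h2.le (n := 2 * n - 2) (by omega)
  linarith

lemma phir_pos {n : ℕ} (hn : 2 ≤ n) {r ξ : ℝ} (hr : 0 < r) (h : r < ξ) :
    0 < phir n r ξ :=
  div_pos (pow_pos (Real.sinh_pos_iff.2 hr) _) (Real.sqrt_pos.2 (den_pos hn hr h))

lemma phir_nonneg (n : ℕ) (r ξ : ℝ) (hr : 0 < r) : 0 ≤ phir n r ξ :=
  div_nonneg (pow_nonneg (Real.sinh_pos_iff.2 hr).le _) (Real.sqrt_nonneg _)

lemma phir_lt {n : ℕ} (hn : 2 ≤ n) {r₁ r₂ ξ : ℝ} (hr₁ : 0 < r₁) (h12 : r₁ < r₂)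
    (h2 : r₂ < ξ) : phir n r₁ ξ < phir n r₂ ξ := by
  have hr₂ : 0 < r₂ := hr₁.trans h12
  have hs1 : (0:ℝ) < Real.sinh r₁ := Real.sinh_pos_iff.2 hr₁
  have hnum : Real.sinh r₁ ^ (n - 1) < Real.sinh r₂ ^ (n - 1) :=
    pow_lt_pow_left₀ (Real.sinh_lt_sinh.2 h12) hs1.le (by omega)
  have hd2 : 0 < Real.sinh ξ ^ (2 * n - 2) - Real.sinh r₂ ^ (2 * n - 2) := den_pos hn hr₂ h2
  have hdlt : Real.sinh ξ ^ (2 * n - 2) - Real.sinh r₂ ^ (2 * n - 2)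
      < Real.sinh ξ ^ (2 * n - 2) - Real.sinh r₁ ^ (2 * n - 2) := by
    have := pow_lt_pow_left₀ (Real.sinh_lt_sinh.2 h12) hs1.le (n := 2 * n - 2) (by omega)
    linarith
  have hsq : Real.sqrt (Real.sinh ξ ^ (2 * n - 2) - Real.sinh r₂ ^ (2 * n - 2))
      < Real.sqrt (Real.sinh ξ ^ (2 * n - 2) - Real.sinh r₁ ^ (2 * n - 2)) :=
    Real.sqrt_lt_sqrt hd2.le hdlt
  have hsq2 : 0 < Real.sqrt (Real.sinh ξ ^ (2 * n - 2) - Real.sinh r₂ ^ (2 * n - 2)) :=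
    Real.sqrt_pos.2 hd2
  exact div_lt_div₀ hnum hsq.le (pow_nonneg (Real.sinh_pos_iff.2 hr₂).le _) hsq2

/-- Linear lower bound for `sinh ξ ^ k - sinh r ^ k`. -/
lemma sinh_pow_lb {k : ℕ} (hk : 1 ≤ k) {r : ℝ} (hr : 0 < r) {ξ : ℝ} (hξ : r ≤ ξ) :
    (k : ℝ) * Real.sinh r ^ (k - 1) * Real.cosh r * (ξ - r)
      ≤ Real.sinh ξ ^ k - Real.sinh r ^ k := by
  set c : ℝ := (k : ℝ) * Real.sinh r ^ (k - 1) * Real.cosh r with hc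
  have hder : ∀ x : ℝ, HasDerivAt (fun x => Real.sinh x ^ k - c * x)
      ((k : ℝ) * Real.sinh x ^ (k - 1) * Real.cosh x - c) x := fun x =>
    ((Real.hasDerivAt_sinh x).pow k).sub (by simpa using (hasDerivAt_id x).const_mul c)
  have hmono : MonotoneOn (fun x => Real.sinh x ^ k - c * x) (Ici r) := by
    refine monotoneOn_of_deriv_nonneg (convex_Ici r)
      (Continuous.continuousOn (by continuity)) (fun x hx => (hder x).differentiableAt.differentiableWithinAt) ?_
    intro x hx
    rw [interior_Ici] at hx
    rw [(hder x).deriv]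
    have h1 : Real.sinh r ^ (k - 1) ≤ Real.sinh x ^ (k - 1) :=
      pow_le_pow_left₀ (Real.sinh_pos_iff.2 hr).le (Real.sinh_le_sinh.2 hx.le) _
    have h2 : Real.cosh r ≤ Real.cosh x := by
      rw [Real.cosh_le_cosh, abs_of_pos hr, abs_of_pos (hr.trans hx)]
      exact hx.le
    have h3 : (0:ℝ) ≤ Real.sinh r ^ (k - 1) := pow_nonneg (Real.sinh_pos_iff.2 hr).le _
    have h4 : (0:ℝ) < Real.cosh r := Real.cosh_pos r
    have : c ≤ (k : ℝ) * Real.sinh x ^ (k - 1) * Real.cosh x := by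
      have hk0 : (0:ℝ) ≤ (k:ℝ) := by positivity
      have hm : Real.sinh r ^ (k - 1) * Real.cosh r ≤ Real.sinh x ^ (k - 1) * Real.cosh x :=
        mul_le_mul h1 h2 h4.le (h3.trans h1)
      rw [hc, mul_assoc, mul_assoc]
      exact mul_le_mul_of_nonneg_left hm hk0
    linarith
  have := hmono (self_mem_Ici) (mem_Ici.2 hξ) hξ
  simp only at this
  nlinarith [this]


lemma intervalIntegrable_of_sqrt_bound {f : ℝ → ℝ} {a b K : ℝ} (hab : a ≤ b) (hK : 0 ≤ K)
    (hm : AEStronglyMeasurable f (volume.restrict (Set.uIoc a b)))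
    (hb : ∀ x ∈ Set.Ioc a b, |f x| ≤ K / Real.sqrt (x - a)) :
    IntervalIntegrable f volume a b := by
  have h0 : IntervalIntegrable (fun x : ℝ => x ^ (-(1/2) : ℝ)) volume 0 (b - a) :=
    intervalIntegral.intervalIntegrable_rpow' (by norm_num)
  have h1 := (h0.comp_sub_right a).const_mul K
  simp only [zero_add, sub_add_cancel] at h1
  refine h1.mono_fun hm ?_
  rw [uIoc_of_le hab]
  refine (ae_restrict_iff' measurableSet_Ioc).2 ?_
  filter_upwards with x hx
  have hxa : 0 < x - a := sub_pos.2 hx.1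
  have he : K * (x - a) ^ (-(1/2) : ℝ) = K / Real.sqrt (x - a) := by
    rw [Real.rpow_neg hxa.le, Real.sqrt_eq_rpow]
    exact (div_eq_mul_inv _ _).symm
  have hgn : 0 ≤ K * (x - a) ^ (-(1/2) : ℝ) :=
    mul_nonneg hK (Real.rpow_nonneg hxa.le _)
  calc ‖f x‖ = |f x| := rfl
    _ ≤ K / Real.sqrt (x - a) := hb x hx
    _ = K * (x - a) ^ (-(1/2) : ℝ) := he.symm
    _ = ‖K * (x - a) ^ (-(1/2) : ℝ)‖ := (Real.norm_of_nonneg hgn).symm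

lemma phir_intervalIntegrable {n : ℕ} (hn : 2 ≤ n) {r b : ℝ} (hr : 0 < r) (hb : r ≤ b) :
    IntervalIntegrable (phir n r) volume r b := by
  have hs : (0:ℝ) < Real.sinh r := Real.sinh_pos_iff.2 hr
  set c : ℝ := (2 * n - 2 : ℕ) * Real.sinh r ^ (2 * n - 2 - 1) * Real.cosh r with hcdef
  have hc : 0 < c := by
    have : (0:ℝ) < (2 * n - 2 : ℕ) := by
      have : (2:ℕ) ≤ 2 * n - 2 := by omega
      exact_mod_cast Nat.lt_of_lt_of_le Nat.zero_lt_two this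
    positivity
  refine intervalIntegrable_of_sqrt_bound hb
    (K := Real.sinh r ^ (n - 1) / Real.sqrt c)
    (by positivity) ?_ ?_
  · have hmeas : Measurable (phir n r) := by
      apply Measurable.div measurable_const
      exact (Real.continuous_sqrt.comp
        ((Real.continuous_sinh.pow _).sub continuous_const)).measurable
    exact hmeas.aestronglyMeasurable.restrict
  · intro x hx
    have hlb := sinh_pow_lb (k := 2 * n - 2) (by omega) hr hx.1.le
    have hD : c * (x - r) ≤ Real.sinh x ^ (2 * n - 2) - Real.sinh r ^ (2 * n - 2) := by
      calc c * (x - r) ≤ (2 * n - 2 : ℕ) * Real.sinh r ^ (2 * n - 2 - 1) * Real.cosh r * (x - r) :=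
            le_of_eq (by rw [hcdef])
        _ ≤ _ := hlb
    have hxr : 0 < x - r := sub_pos.2 hx.1
    have hcd : 0 < Real.sqrt c * Real.sqrt (x - r) :=
      mul_pos (Real.sqrt_pos.2 hc) (Real.sqrt_pos.2 hxr)
    have hsq : Real.sqrt c * Real.sqrt (x - r)
        ≤ Real.sqrt (Real.sinh x ^ (2 * n - 2) - Real.sinh r ^ (2 * n - 2)) := by
      rw [← Real.sqrt_mul hc.le]
      exact Real.sqrt_le_sqrt hD
    rw [abs_of_nonneg (phir_nonneg n r x hr), div_div]
    simp only [phir]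
    exact div_le_div_of_nonneg_left (by positivity) hcd hsq

lemma psi_nonneg {n : ℕ} {s : ℝ} (hs : 0 ≤ s) (t : ℝ) : 0 ≤ psi n s t :=
  div_nonneg hs (mul_nonneg (Real.sqrt_nonneg _) (Real.sqrt_nonneg _))

lemma psi_intervalIntegrable {n : ℕ} (hn : 2 ≤ n) {s T : ℝ} (hs : 0 < s) (hT : 1 ≤ T) :
    IntervalIntegrable (psi n s) volume 1 T := by
  refine intervalIntegrable_of_sqrt_bound hT (K := s) hs.le ?_ ?_
  · have hmeas : Measurable (psi n s) := by
      apply Measurable.div measurable_const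
      exact ((Real.continuous_sqrt.comp ((continuous_pow _).sub continuous_const)).mul
        (Real.continuous_sqrt.comp (by continuity))).measurable
    exact hmeas.aestronglyMeasurable.restrict
  · intro t ht
    have ht1 : (1:ℝ) < t := ht.1
    have h1 : t - 1 ≤ t ^ (2 * n - 2) - 1 := by
      have : t ^ 1 ≤ t ^ (2 * n - 2) := pow_le_pow_right₀ ht1.le (by omega)
      simpa using this
    have h2 : Real.sqrt (t - 1) ≤ Real.sqrt (t ^ (2 * n - 2) - 1) := Real.sqrt_le_sqrt h1
    have h3 : (1:ℝ) ≤ Real.sqrt (1 + s ^ 2 * t ^ 2) := by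
      calc (1:ℝ) = Real.sqrt 1 := by simp
        _ ≤ Real.sqrt (1 + s ^ 2 * t ^ 2) := Real.sqrt_le_sqrt (by nlinarith)
    have ht0 : 0 < t - 1 := sub_pos.2 ht1
    have hden : Real.sqrt (t - 1) * 1 ≤ Real.sqrt (t ^ (2 * n - 2) - 1)
        * Real.sqrt (1 + s ^ 2 * t ^ 2) := by
      apply mul_le_mul h2 h3 zero_le_one (Real.sqrt_nonneg _)
    rw [abs_of_nonneg (psi_nonneg hs.le t)]
    simp only [psi]
    calc s / (Real.sqrt (t ^ (2 * n - 2) - 1) * Real.sqrt (1 + s ^ 2 * t ^ 2))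
        ≤ s / (Real.sqrt (t - 1) * 1) :=
          div_le_div_of_nonneg_left hs.le (mul_pos (Real.sqrt_pos.2 ht0) one_pos) hden
      _ = s / Real.sqrt (t - 1) := by rw [mul_one]

lemma psi_pos {n : ℕ} (hn : 2 ≤ n) {s t : ℝ} (hs : 0 < s) (ht : 1 < t) : 0 < psi n s t := by
  have h1 : (1:ℝ) < t ^ (2 * n - 2) := one_lt_pow₀ ht (by omega)
  have : 0 < Real.sqrt (t ^ (2 * n - 2) - 1) := Real.sqrt_pos.2 (by linarith)
  have : 0 < Real.sqrt (1 + s ^ 2 * t ^ 2) := Real.sqrt_pos.2 (by positivity)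
  exact div_pos hs (by positivity)

lemma psi_lt {n : ℕ} (hn : 2 ≤ n) {s₁ s₂ t : ℝ} (hs₁ : 0 < s₁) (h12 : s₁ < s₂) (ht : 1 < t) :
    psi n s₁ t < psi n s₂ t := by
  have hs₂ : 0 < s₂ := hs₁.trans h12
  have h1 : (1:ℝ) < t ^ (2 * n - 2) := one_lt_pow₀ ht (by omega)
  have hC : 0 < Real.sqrt (t ^ (2 * n - 2) - 1) := Real.sqrt_pos.2 (by linarith)
  have hA₁ : (0:ℝ) < 1 + s₁ ^ 2 * t ^ 2 := by positivity
  have hA₂ : (0:ℝ) < 1 + s₂ ^ 2 * t ^ 2 := by positivity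
  have core : s₁ / Real.sqrt (1 + s₁ ^ 2 * t ^ 2) < s₂ / Real.sqrt (1 + s₂ ^ 2 * t ^ 2) := by
    rw [div_lt_div_iff₀ (Real.sqrt_pos.2 hA₁) (Real.sqrt_pos.2 hA₂)]
    have e1 : s₁ * Real.sqrt (1 + s₂ ^ 2 * t ^ 2) = Real.sqrt (s₁ ^ 2 * (1 + s₂ ^ 2 * t ^ 2)) := by
      rw [Real.sqrt_mul (sq_nonneg s₁), Real.sqrt_sq hs₁.le]
    have e2 : s₂ * Real.sqrt (1 + s₁ ^ 2 * t ^ 2) = Real.sqrt (s₂ ^ 2 * (1 + s₁ ^ 2 * t ^ 2)) := by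
      rw [Real.sqrt_mul (sq_nonneg s₂), Real.sqrt_sq hs₂.le]
    rw [e1, e2]
    apply Real.sqrt_lt_sqrt (by positivity)
    nlinarith [sq_nonneg t]
  have e : ∀ s A : ℝ, s / (Real.sqrt (t ^ (2 * n - 2) - 1) * Real.sqrt A)
      = (s / Real.sqrt A) / Real.sqrt (t ^ (2 * n - 2) - 1) := by
    intro s A; rw [div_mul_eq_div_div_swap]
  simp only [psi]
  rw [e, e]
  exact div_lt_div_of_pos_right core hC

lemma psi_tail_bound {n : ℕ} (hn : 2 ≤ n) {s t : ℝ} (hs : 0 < s) (ht : Real.sqrt 2 ≤ t) :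
    psi n s t ≤ Real.sqrt 2 / t ^ 2 := by
  have h2 : (0:ℝ) < Real.sqrt 2 := by positivity
  have ht0 : 0 < t := h2.trans_le ht
  have ht1 : (1:ℝ) ≤ t := by nlinarith [Real.sq_sqrt (by norm_num : (2:ℝ) ≥ 0), sq_nonneg (t - Real.sqrt 2)]
  have ht2 : (2:ℝ) ≤ t ^ 2 := by
    calc (2:ℝ) = Real.sqrt 2 ^ 2 := (Real.sq_sqrt (by norm_num)).symm
      _ ≤ t ^ 2 := pow_le_pow_left₀ h2.le ht 2
  have hp : t ^ 2 ≤ t ^ (2 * n - 2) := pow_le_pow_right₀ ht1 (by omega)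
  have hq : t ^ 2 / 2 ≤ t ^ (2 * n - 2) - 1 := by nlinarith
  have h4 : t / Real.sqrt 2 ≤ Real.sqrt (t ^ (2 * n - 2) - 1) := by
    have : Real.sqrt (t ^ 2 / 2) ≤ Real.sqrt (t ^ (2 * n - 2) - 1) := Real.sqrt_le_sqrt hq
    rwa [Real.sqrt_div (sq_nonneg t), Real.sqrt_sq ht0.le] at this
  have h5 : s * t ≤ Real.sqrt (1 + s ^ 2 * t ^ 2) := by
    rw [show (1:ℝ) + s ^ 2 * t ^ 2 = 1 + (s * t) ^ 2 by ring]
    have : Real.sqrt ((s * t) ^ 2) ≤ Real.sqrt (1 + (s * t) ^ 2) :=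
      Real.sqrt_le_sqrt (by nlinarith)
    rwa [Real.sqrt_sq (by positivity)] at this
  have hden : t / Real.sqrt 2 * (s * t) ≤ Real.sqrt (t ^ (2 * n - 2) - 1)
      * Real.sqrt (1 + s ^ 2 * t ^ 2) :=
    mul_le_mul h4 h5 (by positivity) (Real.sqrt_nonneg _)
  have hd0 : 0 < t / Real.sqrt 2 * (s * t) := by positivity
  calc psi n s t = s / (Real.sqrt (t ^ (2 * n - 2) - 1) * Real.sqrt (1 + s ^ 2 * t ^ 2)) := rfl
    _ ≤ s / (t / Real.sqrt 2 * (s * t)) := div_le_div_of_nonneg_left hs.le hd0 hden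
    _ = Real.sqrt 2 / t ^ 2 := by field_simp

lemma gr_eq {n : ℕ} (hn : 2 ≤ n) {r ρ : ℝ} (hr : 0 < r) (hρ : r < ρ) :
    gr n r ρ = ∫ t in (1:ℝ)..(Real.sinh ρ / Real.sinh r), psi n (Real.sinh r) t := by
  have hs : 0 < Real.sinh r := Real.sinh_pos_iff.2 hr
  set s := Real.sinh r with hsdef
  set T := Real.sinh ρ / s with hTdef
  have hT1 : 1 < T := (one_lt_div hs).2 (Real.sinh_lt_sinh.2 hρ)
  set f : ℝ → ℝ := fun ξ => Real.sinh ξ / s with hf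
  have hmono : StrictMono f := Real.sinh_strictMono.div_const hs
  have himg : f '' Ioo r ρ = Ioo 1 T := by
    apply Subset.antisymm
    · rintro _ ⟨ξ, hξ, rfl⟩
      constructor
      · exact (one_lt_div hs).2 (Real.sinh_lt_sinh.2 hξ.1)
      · exact div_lt_div_of_pos_right (Real.sinh_lt_sinh.2 hξ.2) hs
    · intro x hx
      have h := intermediate_value_Ioo (f := f) hρ.le
        ((Real.continuous_sinh.div_const s).continuousOn)
      apply h
      have hfr : f r = 1 := div_self hs.ne'
      have hfρ : f ρ = T := rfl
      rw [hfr, hfρ]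
      exact hx
  have hder : ∀ ξ ∈ Ioo r ρ, HasDerivWithinAt f (Real.cosh ξ / s) (Ioo r ρ) ξ :=
    fun ξ _ => ((Real.hasDerivAt_sinh ξ).div_const s).hasDerivWithinAt
  have hinj : InjOn f (Ioo r ρ) := hmono.injective.injOn
  have key := integral_image_eq_integral_abs_deriv_smul measurableSet_Ioo hder hinj (psi n s)
  rw [himg] at key
  have hpt : EqOn (fun ξ => |Real.cosh ξ / s| • psi n s (f ξ)) (phir n r) (Ioo r ρ) := by
    intro ξ hξ
    have hX : s < Real.sinh ξ := Real.sinh_lt_sinh.2 hξ.1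
    have hXpos : 0 < Real.sinh ξ := hs.trans hX
    have hcosh : 0 < Real.cosh ξ := Real.cosh_pos ξ
    have hden : 0 < Real.sinh ξ ^ (2 * n - 2) - s ^ (2 * n - 2) := den_pos hn hr hξ.1
    have hsq : Real.sqrt (s ^ (2 * n - 2)) = s ^ (n - 1) := by
      rw [show s ^ (2 * n - 2) = (s ^ (n - 1)) ^ 2 by rw [← pow_mul]; congr 1; omega]
      exact Real.sqrt_sq (pow_nonneg hs.le _)
    simp only [smul_eq_mul, psi, phir, hf]
    rw [abs_of_pos (div_pos hcosh hs)]
    rw [div_pow, div_sub_one (pow_ne_zero _ hs.ne'), Real.sqrt_div hden.le, hsq]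
    rw [show 1 + s ^ 2 * (Real.sinh ξ / s) ^ 2 = Real.cosh ξ ^ 2 by
      rw [Real.cosh_sq]; field_simp; ring]
    rw [Real.sqrt_sq hcosh.le]
    have h1 : Real.sqrt (Real.sinh ξ ^ (2 * n - 2) - s ^ (2 * n - 2)) ≠ 0 :=
      (Real.sqrt_pos.2 hden).ne'
    have h2 : (s : ℝ) ^ (n - 1) ≠ 0 := (pow_pos hs _).ne'
    simp only [← hsdef]
    field_simp
  rw [setIntegral_congr_fun measurableSet_Ioo hpt] at key
  simp only [gr]
  rw [intervalIntegral.integral_of_le hρ.le, integral_Ioc_eq_integral_Ioo,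
      intervalIntegral.integral_of_le hT1.le, integral_Ioc_eq_integral_Ioo, ← key]

lemma gr_add {n : ℕ} (hn : 2 ≤ n) {r a b : ℝ} (hr : 0 < r) (ha : r ≤ a) (hab : a ≤ b) :
    gr n r b = gr n r a + ∫ x in a..b, phir n r x := by
  have h1 : IntervalIntegrable (phir n r) volume r a := phir_intervalIntegrable hn hr ha
  have h2 : IntervalIntegrable (phir n r) volume a b :=
    (phir_intervalIntegrable hn hr (ha.trans hab)).mono_set
      (by rw [uIcc_of_le hab, uIcc_of_le (ha.trans hab)]; exact Icc_subset_Icc ha le_rfl)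
  simp only [gr]
  rw [← intervalIntegral.integral_add_adjacent_intervals h1 h2]

end Cat

set_option maxHeartbeats 2000000 in
theorem stmt11' (n : ℕ) (hn : 2 ≤ n) (r₁ r₂ : ℝ) (hr₁ : 0 < r₁) (hr₁₂ : r₁ < r₂) :
    (∃! ρ : ℝ, ρ ∈ Set.Ici r₂ ∧ gr n r₁ ρ = gr n r₂ ρ) ∧
    ∀ ρ ∈ Set.Ici r₂, gr n r₁ ρ = gr n r₂ ρ → r₂ < ρ := by
  have hr₂ : 0 < r₂ := hr₁.trans hr₁₂
  set D : ℝ → ℝ := fun ρ => gr n r₁ ρ - gr n r₂ ρ with hD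
  clear_value D
  -- strict antitonicity on Ici r₂
  have hanti : ∀ a ∈ Ici r₂, ∀ b ∈ Ici r₂, a < b → D b < D a := by
    intro a ha b hb hab
    have ha' : r₂ ≤ a := ha
    have ha'' : r₁ ≤ a := hr₁₂.le.trans ha'
    have e1 : gr n r₁ b = gr n r₁ a + ∫ x in a..b, phir n r₁ x :=
      Cat.gr_add hn hr₁ ha'' hab.le
    have e2 : gr n r₂ b = gr n r₂ a + ∫ x in a..b, phir n r₂ x :=
      Cat.gr_add hn hr₂ ha' hab.le
    have hi2 : IntervalIntegrable (phir n r₂) volume a b :=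
      (Cat.phir_intervalIntegrable hn hr₂ (ha'.trans hab.le)).mono_set
        (by rw [uIcc_of_le hab.le, uIcc_of_le (ha'.trans hab.le)]
            exact Icc_subset_Icc ha' le_rfl)
    have hi1 : IntervalIntegrable (phir n r₁) volume a b :=
      (Cat.phir_intervalIntegrable hn hr₁ (ha''.trans hab.le)).mono_set
        (by rw [uIcc_of_le hab.le, uIcc_of_le (ha''.trans hab.le)]
            exact Icc_subset_Icc ha'' le_rfl)
    have hpos : 0 < ∫ x in a..b, (phir n r₂ x - phir n r₁ x) := by
      refine intervalIntegral.intervalIntegral_pos_of_pos_on (hi2.sub hi1) ?_ hab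
      intro x hx
      exact sub_pos.2 (Cat.phir_lt hn hr₁ hr₁₂ (lt_of_le_of_lt ha' hx.1))
    rw [intervalIntegral.integral_sub hi2 hi1] at hpos
    simp only [hD]
    rw [e1, e2]
    linarith
  -- positivity at r₂
  have hgrr₂ : gr n r₂ r₂ = 0 := by simp only [gr]; exact intervalIntegral.integral_same
  have hDr₂ : 0 < D r₂ := by
    have hpos : 0 < gr n r₁ r₂ := by
      simp only [gr]
      exact intervalIntegral.intervalIntegral_pos_of_pos_on
        (Cat.phir_intervalIntegrable hn hr₁ hr₁₂.le)
        (fun x hx => Cat.phir_pos hn hr₁ hx.1) hr₁₂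
    simp only [hD]
    rw [hgrr₂]
    linarith
  -- set up for the negative value
  have hs₁ : 0 < Real.sinh r₁ := Real.sinh_pos_iff.2 hr₁
  have hs₂ : 0 < Real.sinh r₂ := Real.sinh_pos_iff.2 hr₂
  have hs₁₂ : Real.sinh r₁ < Real.sinh r₂ := Real.sinh_lt_sinh.2 hr₁₂
  set s₁ := Real.sinh r₁ with hs₁def
  set s₂ := Real.sinh r₂ with hs₂def
  have hδint : IntervalIntegrable (fun t => Cat.psi n s₂ t - Cat.psi n s₁ t) volume 1 2 :=
    (Cat.psi_intervalIntegrable hn hs₂ one_le_two).sub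
      (Cat.psi_intervalIntegrable hn hs₁ one_le_two)
  set δ := ∫ t in (1:ℝ)..2, (Cat.psi n s₂ t - Cat.psi n s₁ t) with hδdef
  have hδpos : 0 < δ := intervalIntegral.intervalIntegral_pos_of_pos_on hδint
      (fun t ht => sub_pos.2 (Cat.psi_lt hn hs₁ hs₁₂ ht.1)) one_lt_two
  set M := max 2 (2 * Real.sqrt 2 / δ) with hMdef
  have hM2 : (2:ℝ) ≤ M := le_max_left _ _
  have hMδ : 2 * Real.sqrt 2 / δ ≤ M := le_max_right _ _
  have hM0 : (0:ℝ) < M := lt_of_lt_of_le two_pos hM2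
  set ρ₀ := Real.arsinh (s₂ * M) with hρ₀def
  have hsρ₀ : Real.sinh ρ₀ = s₂ * M := Real.sinh_arsinh _
  have hr₂ρ₀ : r₂ < ρ₀ := by
    rw [← Real.sinh_lt_sinh, hsρ₀]
    nlinarith
  have hr₁ρ₀ : r₁ < ρ₀ := hr₁₂.trans hr₂ρ₀
  set T₂ := Real.sinh ρ₀ / s₂ with hT₂def
  set T₁ := Real.sinh ρ₀ / s₁ with hT₁def
  have hT₂M : T₂ = M := by rw [hT₂def, hsρ₀]; field_simp
  have hT₂T₁ : T₂ < T₁ := by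
    rw [hT₂def, hT₁def]
    exact div_lt_div_of_pos_left (by rw [hsρ₀]; positivity) hs₁ hs₁₂
  have h1T₂ : (1:ℝ) < T₂ := by rw [hT₂M]; linarith
  have h1T₁ : (1:ℝ) < T₁ := h1T₂.trans hT₂T₁
  have h2T₂ : (2:ℝ) ≤ T₂ := by rw [hT₂M]; exact hM2
  have e1 : gr n r₁ ρ₀ = ∫ t in (1:ℝ)..T₁, Cat.psi n s₁ t := Cat.gr_eq hn hr₁ hr₁ρ₀
  have e2 : gr n r₂ ρ₀ = ∫ t in (1:ℝ)..T₂, Cat.psi n s₂ t := Cat.gr_eq hn hr₂ hr₂ρ₀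
  have hi1T₁ : IntervalIntegrable (Cat.psi n s₁) volume 1 T₁ :=
    Cat.psi_intervalIntegrable hn hs₁ h1T₁.le
  have hi1T₂ : IntervalIntegrable (Cat.psi n s₁) volume 1 T₂ :=
    Cat.psi_intervalIntegrable hn hs₁ h1T₂.le
  have hi2T₂ : IntervalIntegrable (Cat.psi n s₂) volume 1 T₂ :=
    Cat.psi_intervalIntegrable hn hs₂ h1T₂.le
  have hiT₂T₁ : IntervalIntegrable (Cat.psi n s₁) volume T₂ T₁ :=
    hi1T₁.mono_set (by rw [uIcc_of_le hT₂T₁.le, uIcc_of_le h1T₁.le]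
                       exact Icc_subset_Icc h1T₂.le le_rfl)
  have hsplit : (∫ t in (1:ℝ)..T₁, Cat.psi n s₁ t)
      = (∫ t in (1:ℝ)..T₂, Cat.psi n s₁ t) + ∫ t in T₂..T₁, Cat.psi n s₁ t :=
    (intervalIntegral.integral_add_adjacent_intervals hi1T₂ hiT₂T₁).symm
  -- first chunk
  have hint2T₂ : IntervalIntegrable (fun t => Cat.psi n s₂ t - Cat.psi n s₁ t) volume 2 T₂ :=
    (hi2T₂.sub hi1T₂).mono_set
      (by rw [uIcc_of_le h2T₂, uIcc_of_le h1T₂.le]; exact Icc_subset_Icc one_le_two le_rfl)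
  have hd12 : (∫ t in (1:ℝ)..T₂, (Cat.psi n s₂ t - Cat.psi n s₁ t))
      = δ + ∫ t in (2:ℝ)..T₂, (Cat.psi n s₂ t - Cat.psi n s₁ t) :=
    (intervalIntegral.integral_add_adjacent_intervals hδint hint2T₂).symm
  clear_value s₁ s₂ δ M ρ₀ T₂ T₁
  have htail2 : 0 ≤ ∫ t in (2:ℝ)..T₂, (Cat.psi n s₂ t - Cat.psi n s₁ t) := by
    apply intervalIntegral.integral_nonneg h2T₂
    intro t ht
    exact (sub_pos.2 (Cat.psi_lt hn hs₁ hs₁₂ (lt_of_lt_of_le one_lt_two ht.1))).le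
  have hA : (∫ t in (1:ℝ)..T₂, Cat.psi n s₁ t) - (∫ t in (1:ℝ)..T₂, Cat.psi n s₂ t) ≤ -δ := by
    have hsub := intervalIntegral.integral_sub hi2T₂ hi1T₂
    rw [hd12] at hsub
    linarith
  -- tail bound
  have h0T₂ : (0:ℝ) < T₂ := lt_trans one_pos h1T₂
  have h0T₁ : (0:ℝ) < T₁ := h0T₂.trans hT₂T₁
  have hB : (∫ t in T₂..T₁, Cat.psi n s₁ t) ≤ δ / 2 := by
    have hsqrt2 : Real.sqrt 2 ≤ 2 := by
      nlinarith [Real.sq_sqrt (show (0:ℝ) ≤ 2 by norm_num), Real.sqrt_nonneg 2]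
    have hb1 : ∀ t ∈ Icc T₂ T₁, Cat.psi n s₁ t ≤ Real.sqrt 2 / t ^ 2 := by
      intro t ht
      exact Cat.psi_tail_bound hn hs₁ (le_trans (hsqrt2.trans (hM2.trans_eq hT₂M.symm)) ht.1)
    have hcont : IntervalIntegrable (fun t => Real.sqrt 2 / t ^ 2) volume T₂ T₁ := by
      apply ContinuousOn.intervalIntegrable
      apply ContinuousOn.div continuousOn_const (continuousOn_pow 2)
      intro t ht
      rw [uIcc_of_le hT₂T₁.le] at ht
      exact pow_ne_zero 2 (ne_of_gt (lt_of_lt_of_le h0T₂ ht.1))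
    have hmon := intervalIntegral.integral_mono_on hT₂T₁.le hiT₂T₁ hcont hb1
    have hz : (∫ t in T₂..T₁, t ^ (-2 : ℤ)) = (T₁ ^ (-1:ℤ) - T₂ ^ (-1:ℤ)) / ((-2 : ℤ) + 1 : ℝ) := by
      rw [integral_zpow]
      · norm_num
      · refine Or.inr ⟨by norm_num, ?_⟩
        rw [uIcc_of_le hT₂T₁.le]
        intro h
        exact absurd h.1 (not_le.2 h0T₂)
    have hval : (∫ t in T₂..T₁, Real.sqrt 2 / t ^ 2)
        = Real.sqrt 2 * ((T₁ ^ (-1:ℤ) - T₂ ^ (-1:ℤ)) / ((-2 : ℤ) + 1 : ℝ)) := by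
      rw [← hz, ← intervalIntegral.integral_const_mul]
      apply intervalIntegral.integral_congr
      intro t ht
      show Real.sqrt 2 / t ^ 2 = Real.sqrt 2 * t ^ (-2 : ℤ)
      rw [zpow_neg, div_eq_mul_inv, show ((2:ℤ)) = ((2:ℕ) : ℤ) by norm_num, zpow_natCast]
    have hlast : Real.sqrt 2 * ((T₁ ^ (-1:ℤ) - T₂ ^ (-1:ℤ)) / ((-2 : ℤ) + 1 : ℝ)) ≤ δ / 2 := by
      have hTT : (T₁:ℝ) ^ (-1:ℤ) ≤ T₂ ^ (-1:ℤ) := by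
        rw [zpow_neg, zpow_neg, zpow_one, zpow_one]
        exact inv_anti₀ h0T₂ hT₂T₁.le
      have h2' : Real.sqrt 2 * ((T₁ ^ (-1:ℤ) - T₂ ^ (-1:ℤ)) / ((-2 : ℤ) + 1 : ℝ))
          ≤ Real.sqrt 2 / T₂ := by
        rw [zpow_neg, zpow_neg, zpow_one, zpow_one]
        push_cast
        have hT₁inv : (0:ℝ) ≤ T₁⁻¹ := by positivity
        have : (T₁⁻¹ - T₂⁻¹) / (-2 + 1 : ℝ) = T₂⁻¹ - T₁⁻¹ := by ring
        rw [this, div_eq_mul_inv]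
        nlinarith [Real.sqrt_nonneg 2]
      have h3' : Real.sqrt 2 / T₂ ≤ δ / 2 := by
        rw [hT₂M]
        have hpos : (0:ℝ) < 2 * Real.sqrt 2 / δ := by positivity
        calc Real.sqrt 2 / M ≤ Real.sqrt 2 / (2 * Real.sqrt 2 / δ) :=
              div_le_div_of_nonneg_left (Real.sqrt_nonneg 2) hpos hMδ
          _ = δ / 2 := by
              have hs2 : Real.sqrt 2 ≠ 0 := by positivity
              field_simp
      linarith
    linarith [hmon, hval.le, hval.ge]
  have hDneg : D ρ₀ < 0 := by
    simp only [hD]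
    rw [e1, e2, hsplit]
    linarith
  -- continuity and IVT
  have hcontD : ContinuousOn D (Icc r₂ ρ₀) := by
    have c1 : ContinuousOn (gr n r₁) (Icc r₂ ρ₀) := by
      have hIc : IntegrableOn (phir n r₁) (Icc r₁ ρ₀) volume := by
        rw [integrableOn_Icc_iff_integrableOn_Ioc]
        exact (Cat.phir_intervalIntegrable hn hr₁ hr₁ρ₀.le).1
      have := (intervalIntegral.continuousOn_primitive hIc).mono
        (Icc_subset_Icc hr₁₂.le le_rfl)
      apply this.congr
      intro x hx
      simp only [gr]
      rw [intervalIntegral.integral_of_le (hr₁₂.le.trans hx.1)]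
    have c2 : ContinuousOn (gr n r₂) (Icc r₂ ρ₀) := by
      have hIc : IntegrableOn (phir n r₂) (Icc r₂ ρ₀) volume := by
        rw [integrableOn_Icc_iff_integrableOn_Ioc]
        exact (Cat.phir_intervalIntegrable hn hr₂ hr₂ρ₀.le).1
      apply (intervalIntegral.continuousOn_primitive hIc).congr
      intro x hx
      simp only [gr]
      rw [intervalIntegral.integral_of_le hx.1]
    rw [hD]
    exact c1.sub c2
  obtain ⟨ρ, hρmem, hρeq⟩ :=
    intermediate_value_Icc' hr₂ρ₀.le hcontD ⟨hDneg.le, hDr₂.le⟩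
  have hρIci : ρ ∈ Ici r₂ := hρmem.1
  have huniq : ∀ x ∈ Ici r₂, gr n r₁ x = gr n r₂ x → x = ρ := by
    intro x hx hgx
    have hDx : D x = 0 := by rw [hD]; exact sub_eq_zero.2 hgx
    by_contra hne
    rcases lt_or_gt_of_ne hne with h | h
    · have := hanti x hx ρ hρIci h
      rw [hDx, hρeq] at this
      exact lt_irrefl _ this
    · have := hanti ρ hρIci x hx h
      rw [hDx, hρeq] at this
      exact lt_irrefl _ this
  constructor
  · refine ⟨ρ, ⟨hρIci, ?_⟩, fun x hx => huniq x hx.1 hx.2⟩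
    have := hρeq
    rw [hD] at this
    exact sub_eq_zero.1 this
  · intro x hx hgx
    rcases eq_or_lt_of_le (mem_Ici.1 hx) with h | h
    · exfalso
      have hDx : D x = 0 := by rw [hD]; exact sub_eq_zero.2 hgx
      rw [← h] at hDx
      rw [hDx] at hDr₂
      exact lt_irrefl _ hDr₂
    · exact h

/-- the generating curves of two half-catenoids of necks `r₁ < r₂`
intersect at exactly one point, which lies strictly beyond `r₂`. -/
theorem stmt11 (n : ℕ) (hn : 2 ≤ n) (r₁ r₂ : ℝ) (hr₁ : 0 < r₁) (hr₁₂ : r₁ < r₂) :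
    (∃! ρ : ℝ, ρ ∈ Set.Ici r₂ ∧ gr n r₁ ρ = gr n r₂ ρ) ∧
    ∀ ρ ∈ Set.Ici r₂, gr n r₁ ρ = gr n r₂ ρ → r₂ < ρ :=
  stmt11' n hn r₁ r₂ hr₁ hr₁₂

end
end
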